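/- arXiv:1602.07996 — 7 statements merged into one kernel-verified Lean document; each statement's English description precedes it below -/
import Mathlib

section
/- Let K be a field and R = K[X_1,…,X_n]. If I and J are polymatroidal ideals of R, then the product I·J is again a polymatroidal ideal. -/
open MvPolynomial

namespace PolyMatAux

variable {n : ℕ}

lemma adj_apply (a : Fin n →₀ ℕ) (i j h : Fin n) :
    ((a - Finsupp.single i 1 + Finsupp.single j 1 : Fin n →₀ ℕ)) h =
      a h - (if i = h then 1 else 0) + (if j = h then 1 else 0) := by
  rw [Finsupp.add_apply, Finsupp.tsub_apply, Finsupp.single_apply, Finsupp.single_apply]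

/-- L1 distance -/
def Dst (a b : Fin n →₀ ℕ) : ℕ := ∑ h : Fin n, ((a h : ℤ) - b h).natAbs

lemma dist_lt (a a' : Fin n →₀ ℕ) (i j : Fin n) (h1 : a' i < a i) (h2 : a j < a' j) :
    Dst (a - Finsupp.single i 1 + Finsupp.single j 1) a' < Dst a a' := by
  have hij : i ≠ j := by rintro rfl; omega
  apply Finset.sum_lt_sum
  · intro h _
    rw [adj_apply]
    split_ifs <;> subst_vars <;> first | omega | simp_all
  · refine ⟨i, Finset.mem_univ i, ?_⟩
    rw [adj_apply, if_pos rfl, if_neg (Ne.symm hij)]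
    omega

/-- the exchange property -/
def Exc (B : Set (Fin n →₀ ℕ)) : Prop :=
  ∀ a ∈ B, ∀ a' ∈ B, ∀ i : Fin n, a' i < a i →
    ∃ j : Fin n, a j < a' j ∧ a - Finsupp.single i 1 + Finsupp.single j 1 ∈ B

lemma key (B1 B2 : Set (Fin n →₀ ℕ)) (h1 : Exc B1) (h2 : Exc B2) :
    ∀ m : ℕ, ∀ a ∈ B1, ∀ b ∈ B2, ∀ a' ∈ B1, ∀ b' ∈ B2,
      Dst a a' + Dst b b' ≤ m → ∀ i : Fin n, (a' + b') i < (a + b) i →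
      ∃ j : Fin n, (a + b) j < (a' + b') j ∧
        ∃ p ∈ B1, ∃ q ∈ B2,
          (a + b) - Finsupp.single i 1 + Finsupp.single j 1 = p + q := by
  intro m
  induction m using Nat.strong_induction_on with
  | _ m IH =>
  intro a ha b hb a' ha' b' hb' hm i hi
  rw [Finsupp.add_apply, Finsupp.add_apply] at hi
  rcases lt_or_ge (a' i) (a i) with hia | hia
  · -- a-side branch
    obtain ⟨j, haj, hA⟩ := h1 a ha a' ha' i hia
    have hij : i ≠ j := by rintro rfl; omega
    by_cases hcj : (a + b) j < (a' + b') j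
    · refine ⟨j, hcj, _, hA, b, hb, ?_⟩
      ext h
      rw [adj_apply, Finsupp.add_apply, Finsupp.add_apply, adj_apply]
      split_ifs <;> subst_vars <;> first | omega | simp_all
    · rw [Finsupp.add_apply, Finsupp.add_apply] at hcj
      have hbj : b' j < b j := by omega
      obtain ⟨k, hbk, hB⟩ := h2 b hb b' hb' j hbj
      have hjk : j ≠ k := by rintro rfl; omega
      have hc1 : ∀ h : Fin n,
          (((a - Finsupp.single i 1 + Finsupp.single j 1) +
           (b - Finsupp.single j 1 + Finsupp.single k 1) : Fin n →₀ ℕ)) h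
            = a h + b h - (if i = h then 1 else 0) + (if k = h then 1 else 0) := by
        intro h
        rw [Finsupp.add_apply, adj_apply, adj_apply]
        split_ifs <;> subst_vars <;> first | omega | simp_all
      by_cases hck : (a + b) k < (a' + b') k
      · refine ⟨k, hck, _, hA, _, hB, ?_⟩
        ext h
        rw [hc1 h, adj_apply, Finsupp.add_apply]
      · rw [Finsupp.add_apply, Finsupp.add_apply] at hck
        have hda := dist_lt a a' i j hia haj
        have hdb := dist_lt b b' j k hbj hbk
        have hc1k : (a' + b') k <
            (((a - Finsupp.single i 1 + Finsupp.single j 1) +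
             (b - Finsupp.single j 1 + Finsupp.single k 1) : Fin n →₀ ℕ)) k := by
          rw [hc1 k, Finsupp.add_apply, if_pos rfl]
          split_ifs <;> subst_vars <;> omega
        obtain ⟨j', hcj', p, hp, q, hq, heq⟩ :=
          IH (Dst (a - Finsupp.single i 1 + Finsupp.single j 1) a' +
              Dst (b - Finsupp.single j 1 + Finsupp.single k 1) b')
            (by omega) _ hA _ hB a' ha' b' hb' le_rfl k hc1k
        have hj'k : j' ≠ k := by
          rintro rfl
          exact absurd hcj' (not_lt.mpr (le_of_lt hc1k))
        have hj'i : j' ≠ i := by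
          rintro rfl
          rw [hc1 j', Finsupp.add_apply] at hcj'
          split_ifs at hcj' <;> subst_vars <;> omega
        have hcj'' : (a + b) j' < (a' + b') j' := by
          rw [hc1 j', Finsupp.add_apply] at hcj'
          rw [Finsupp.add_apply, Finsupp.add_apply]
          split_ifs at hcj' <;> subst_vars <;> first | omega | simp_all
        refine ⟨j', hcj'', p, hp, q, hq, ?_⟩
        rw [← heq]
        ext h
        rw [adj_apply, adj_apply, hc1 h, Finsupp.add_apply]
        split_ifs <;> subst_vars <;> first | omega | simp_all
  · -- b-side branch (symmetric)
    have hib : b' i < b i := by omega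
    obtain ⟨j, hbj, hB⟩ := h2 b hb b' hb' i hib
    have hij : i ≠ j := by rintro rfl; omega
    by_cases hcj : (a + b) j < (a' + b') j
    · refine ⟨j, hcj, a, ha, _, hB, ?_⟩
      ext h
      rw [adj_apply, Finsupp.add_apply, Finsupp.add_apply, adj_apply]
      split_ifs <;> subst_vars <;> first | omega | simp_all
    · rw [Finsupp.add_apply, Finsupp.add_apply] at hcj
      have haj : a' j < a j := by omega
      obtain ⟨k, hak, hA⟩ := h1 a ha a' ha' j haj
      have hjk : j ≠ k := by rintro rfl; omega
      have hc1 : ∀ h : Fin n,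
          (((a - Finsupp.single j 1 + Finsupp.single k 1) +
           (b - Finsupp.single i 1 + Finsupp.single j 1) : Fin n →₀ ℕ)) h
            = a h + b h - (if i = h then 1 else 0) + (if k = h then 1 else 0) := by
        intro h
        rw [Finsupp.add_apply, adj_apply, adj_apply]
        split_ifs <;> subst_vars <;> first | omega | simp_all
      by_cases hck : (a + b) k < (a' + b') k
      · refine ⟨k, hck, _, hA, _, hB, ?_⟩
        ext h
        rw [hc1 h, adj_apply, Finsupp.add_apply]
      · rw [Finsupp.add_apply, Finsupp.add_apply] at hck
        have hda := dist_lt a a' j k haj hak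
        have hdb := dist_lt b b' i j hib hbj
        have hc1k : (a' + b') k <
            (((a - Finsupp.single j 1 + Finsupp.single k 1) +
             (b - Finsupp.single i 1 + Finsupp.single j 1) : Fin n →₀ ℕ)) k := by
          rw [hc1 k, Finsupp.add_apply, if_pos rfl]
          split_ifs <;> subst_vars <;> omega
        obtain ⟨j', hcj', p, hp, q, hq, heq⟩ :=
          IH (Dst (a - Finsupp.single j 1 + Finsupp.single k 1) a' +
              Dst (b - Finsupp.single i 1 + Finsupp.single j 1) b')
            (by omega) _ hA _ hB a' ha' b' hb' le_rfl k hc1k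
        have hj'k : j' ≠ k := by
          rintro rfl
          exact absurd hcj' (not_lt.mpr (le_of_lt hc1k))
        have hj'i : j' ≠ i := by
          rintro rfl
          rw [hc1 j', Finsupp.add_apply] at hcj'
          split_ifs at hcj' <;> subst_vars <;> omega
        have hcj'' : (a + b) j' < (a' + b') j' := by
          rw [hc1 j', Finsupp.add_apply] at hcj'
          rw [Finsupp.add_apply, Finsupp.add_apply]
          split_ifs at hcj' <;> subst_vars <;> first | omega | simp_all
        refine ⟨j', hcj'', p, hp, q, hq, ?_⟩
        rw [← heq]
        ext h
        rw [adj_apply, adj_apply, hc1 h, Finsupp.add_apply]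
        split_ifs <;> subst_vars <;> first | omega | simp_all



lemma sum_add_one (u : Fin n →₀ ℕ) (j : Fin n) :
    ((u + Finsupp.single j 1).sum fun _ e => e) = (u.sum fun _ e => e) + 1 := by
  rw [Finsupp.sum_add_index' (fun _ => rfl) (fun _ _ _ => rfl),
    Finsupp.sum_single_index rfl]

lemma sum_adj (a : Fin n →₀ ℕ) (i j : Fin n) (h : 1 ≤ a i) :
    ((a - Finsupp.single i 1 + Finsupp.single j 1).sum fun _ e => e)
      = a.sum fun _ e => e := by
  have h2 : a - Finsupp.single i 1 + Finsupp.single i 1 = a :=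
    tsub_add_cancel_of_le (Finsupp.single_le_iff.mpr h)
  have e1 := sum_add_one (a - Finsupp.single i 1) j
  have e2 := sum_add_one (a - Finsupp.single i 1) i
  rw [h2] at e2
  omega

lemma eq_of_le_of_sum_eq {u v : Fin n →₀ ℕ} (hle : u ≤ v)
    (hs : (u.sum fun _ e => e) = v.sum fun _ e => e) : u = v := by
  have hl : ∀ h, u h ≤ v h := fun h => Finsupp.le_def.mp hle h
  rw [Finsupp.sum_fintype _ _ (fun _ => rfl), Finsupp.sum_fintype _ _ (fun _ => rfl)] at hs
  ext h
  by_contra hne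
  have hlt : u h < v h := lt_of_le_of_ne (hl h) hne
  have : ∑ x : Fin n, u x < ∑ x : Fin n, v x :=
    Finset.sum_lt_sum (fun x _ => hl x) ⟨h, Finset.mem_univ h, hlt⟩
  omega

lemma mono_mem_iff {K : Type*} [Field K] (G : Set (Fin n →₀ ℕ)) (x : Fin n →₀ ℕ) :
    monomial x (1 : K) ∈ Ideal.span ((fun a => monomial a (1 : K)) '' G) ↔
      ∃ s ∈ G, s ≤ x := by
  rw [mem_ideal_span_monomial_image]
  simp [support_monomial, (one_ne_zero : (1 : K) ≠ 0)]

end PolyMatAux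

open MvPolynomial

def IsPolymatroidal {n : ℕ} {K : Type*} [Field K]
    (I : Ideal (MvPolynomial (Fin n) K)) : Prop :=
  ∃ (d : ℕ) (G : Set (Fin n →₀ ℕ)),
    G.Nonempty ∧
    (∀ a ∈ G, (a.sum fun _ e => e) = d) ∧
    I = Ideal.span ((fun a => (monomial a (1 : K))) '' G) ∧
    (∀ a b : Fin n →₀ ℕ, (a.sum fun _ e => e) = d → (b.sum fun _ e => e) = d →
      monomial a (1 : K) ∈ I → monomial b (1 : K) ∈ I →
      ∀ i : Fin n, b i < a i →
        ∃ j : Fin n, a j < b j ∧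
          monomial (a - Finsupp.single i 1 + Finsupp.single j 1) (1 : K) ∈ I)

/-- The product of two polymatroidal ideals is polymatroidal. -/
theorem product_of_polymatroidal_isPolymatroidal {n : ℕ} {K : Type*} [Field K]
    (I J : Ideal (MvPolynomial (Fin n) K))
    (hI : IsPolymatroidal I) (hJ : IsPolymatroidal J) :
    IsPolymatroidal (I * J) := by
  classical
  obtain ⟨d1, G1, ⟨g1, hg1⟩, hdeg1, hspan1, hex1⟩ := hI
  obtain ⟨d2, G2, ⟨g2, hg2⟩, hdeg2, hspan2, hex2⟩ := hJ
  have hmem1 : ∀ x, monomial x (1 : K) ∈ I ↔ ∃ s ∈ G1, s ≤ x := by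
    intro x; rw [hspan1]; exact PolyMatAux.mono_mem_iff G1 x
  have hmem2 : ∀ x, monomial x (1 : K) ∈ J ↔ ∃ s ∈ G2, s ≤ x := by
    intro x; rw [hspan2]; exact PolyMatAux.mono_mem_iff G2 x
  -- a monomial of the right degree lying in the ideal is in G
  have hGmem1 : ∀ x, (x.sum fun _ e => e) = d1 → monomial x (1 : K) ∈ I → x ∈ G1 := by
    intro x hxd hxm
    obtain ⟨s, hs, hle⟩ := (hmem1 x).mp hxm
    have := PolyMatAux.eq_of_le_of_sum_eq hle (by rw [hxd, hdeg1 s hs])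
    exact this ▸ hs
  have hGmem2 : ∀ x, (x.sum fun _ e => e) = d2 → monomial x (1 : K) ∈ J → x ∈ G2 := by
    intro x hxd hxm
    obtain ⟨s, hs, hle⟩ := (hmem2 x).mp hxm
    have := PolyMatAux.eq_of_le_of_sum_eq hle (by rw [hxd, hdeg2 s hs])
    exact this ▸ hs
  have hexc1 : PolyMatAux.Exc G1 := by
    intro u hu v hv i hlt
    obtain ⟨j, hj, hmm⟩ := hex1 u v (hdeg1 u hu) (hdeg1 v hv)
      ((hmem1 u).mpr ⟨u, hu, le_rfl⟩) ((hmem1 v).mpr ⟨v, hv, le_rfl⟩) i hlt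
    refine ⟨j, hj, hGmem1 _ ?_ hmm⟩
    rw [PolyMatAux.sum_adj u i j (by omega)]
    exact hdeg1 u hu
  have hexc2 : PolyMatAux.Exc G2 := by
    intro u hu v hv i hlt
    obtain ⟨j, hj, hmm⟩ := hex2 u v (hdeg2 u hu) (hdeg2 v hv)
      ((hmem2 u).mpr ⟨u, hu, le_rfl⟩) ((hmem2 v).mpr ⟨v, hv, le_rfl⟩) i hlt
    refine ⟨j, hj, hGmem2 _ ?_ hmm⟩
    rw [PolyMatAux.sum_adj u i j (by omega)]
    exact hdeg2 u hu
  set G : Set (Fin n →₀ ℕ) := {x | ∃ p ∈ G1, ∃ q ∈ G2, p + q = x} with hGdef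
  have hdegG : ∀ x ∈ G, (x.sum fun _ e => e) = d1 + d2 := by
    rintro x ⟨p, hp, q, hq, rfl⟩
    rw [Finsupp.sum_add_index' (fun _ => rfl) (fun _ _ _ => rfl), hdeg1 p hp, hdeg2 q hq]
  have hspanIJ : I * J = Ideal.span ((fun a => monomial a (1 : K)) '' G) := by
    rw [hspan1, hspan2, Ideal.span_mul_span']
    congr 1
    ext f
    constructor
    · rintro hf
      rw [Set.mem_mul] at hf
      obtain ⟨u, ⟨p, hp, rfl⟩, v, ⟨q, hq, rfl⟩, rfl⟩ := hf
      exact ⟨p + q, ⟨p, hp, q, hq, rfl⟩, by rw [monomial_mul, one_mul]⟩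
    · rintro ⟨x, ⟨p, hp, q, hq, rfl⟩, rfl⟩
      have h : (fun a => monomial a (1 : K)) (p + q)
          = monomial p (1 : K) * monomial q (1 : K) := by
        simp only [monomial_mul, one_mul]
      rw [h]
      exact Set.mul_mem_mul ⟨p, hp, rfl⟩ ⟨q, hq, rfl⟩
  have hmemIJ : ∀ x, monomial x (1 : K) ∈ I * J ↔ ∃ s ∈ G, s ≤ x := by
    intro x; rw [hspanIJ]; exact PolyMatAux.mono_mem_iff G x
  have hGmemIJ : ∀ x, (x.sum fun _ e => e) = d1 + d2 →
      monomial x (1 : K) ∈ I * J → x ∈ G := by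
    intro x hxd hxm
    obtain ⟨s, hs, hle⟩ := (hmemIJ x).mp hxm
    have := PolyMatAux.eq_of_le_of_sum_eq hle (by rw [hxd, hdegG s hs])
    exact this ▸ hs
  refine ⟨d1 + d2, G, ⟨g1 + g2, ⟨g1, hg1, g2, hg2, rfl⟩⟩, hdegG, hspanIJ, ?_⟩
  intro x y hxd hyd hxm hym i hlt
  obtain ⟨a, ha, b, hb, hx⟩ := hGmemIJ x hxd hxm
  obtain ⟨a', ha', b', hb', hy⟩ := hGmemIJ y hyd hym
  subst hx; subst hy
  obtain ⟨j, hj, p, hp, q, hq, heq⟩ :=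
    PolyMatAux.key G1 G2 hexc1 hexc2
      (PolyMatAux.Dst a a' + PolyMatAux.Dst b b') a ha b hb a' ha' b' hb' le_rfl i hlt
  refine ⟨j, hj, ?_⟩
  rw [heq]
  exact (hmemIJ _).mpr ⟨p + q, ⟨p, hp, q, hq, rfl⟩, le_rfl⟩
end

section
/- Let K be a field and R = K[X_1,…,X_n]. Every polymatroidal ideal I of R satisfies Ass(R/I^k) ⊆ Ass(R/I^{k+1}) for all integers k > 0. -/
/-!
The key identity is `I ^ (k + 1) : I = I ^ k`. Given it, if `P = I ^ k : f` is prime and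
`I = (g₁, …, gₙ)`, then `P` is the intersection of the ideals `I ^ (k + 1) : f gᵢ`, each of which
contains `P`, so by primality `P` is one of them.

For the identity, let `B` be the exponents of the degree-`d` monomials of `I`, the bases of a
discrete polymatroid with rank function `ρ`. If `x ^ a I ⊆ I ^ (k + 1)`, testing against a base
of maximal weight on a set `A` of variables gives `k d ≤ a(Aᶜ) + k ρ(A)`. This rank condition
forces `a` to dominate a sum of `k` bases: take `k` bases whose sum `s` maximises the overlap
`∑ min(sᵢ, aᵢ)`. A shortest path of single-unit exchanges from a coordinate where `s > a` to one
where `s < a` could be applied one step at a time to increase the overlap; with no such path,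
the coordinates reachable from those where `s > a` violate the rank condition.
-/

open MvPolynomial

open Finset Finsupp Pointwise

namespace Polymatroid

variable {ι : Type*}

noncomputable def exchange (a : ι →₀ ℕ) (i j : ι) : ι →₀ ℕ := a - single i 1 + single j 1

def HasExchange (B : Set (ι →₀ ℕ)) : Prop :=
  ∀ a ∈ B, ∀ b ∈ B, ∀ i, b i < a i → ∃ j, a j < b j ∧ exchange a i j ∈ B

section Exchange

variable {a c : ι →₀ ℕ} {i j p q u v : ι}

theorem exchange_add_single (j : ι) (h : a i ≠ 0) :
    exchange a i j + single i 1 = a + single j 1 := by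
  rw [exchange, add_right_comm,
    tsub_add_cancel_of_le (single_le_iff.mpr (Nat.one_le_iff_ne_zero.mpr h))]

theorem exchange_apply [DecidableEq ι] (a : ι →₀ ℕ) (i j x : ι) :
    exchange a i j x = a x - (if i = x then 1 else 0) + (if j = x then 1 else 0) := by
  simp [exchange, single_apply]

theorem exchange_apply_ne_zero {x : ι} (j : ι) (h : i ≠ x) (hx : a x ≠ 0) :
    exchange a i j x ≠ 0 := by
  classical
  simp [exchange_apply, h, hx]

theorem degree_exchange (j : ι) (h : a i ≠ 0) : (exchange a i j).degree = a.degree := by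
  simpa using congrArg degree (exchange_add_single j h)

theorem exchange_exchange (hi : c i ≠ 0) (hp : c p ≠ 0) (hip : i ≠ p) :
    exchange (exchange c i j) p i = exchange c p j := by
  apply add_right_cancel (b := single p 1)
  rw [exchange_add_single i (exchange_apply_ne_zero j hip hp), exchange_add_single j hi,
    exchange_add_single j hp]

theorem exchange_comm (hu : c u ≠ 0) (hp : c p ≠ 0) (hup : u ≠ p) :
    exchange (exchange c u v) p q = exchange (exchange c p q) u v := by
  apply add_right_cancel (b := single p 1 + single u 1)
  calc exchange (exchange c u v) p q + (single p 1 + single u 1)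
      = (exchange (exchange c u v) p q + single p 1) + single u 1 := by rw [add_assoc]
    _ = (exchange c u v + single u 1) + single q 1 := by
      rw [exchange_add_single q (exchange_apply_ne_zero v hup hp), add_right_comm]
    _ = (exchange c p q + single p 1) + single v 1 := by
      rw [exchange_add_single v hu, exchange_add_single q hp, add_right_comm]
    _ = (exchange (exchange c p q) u v + single u 1) + single p 1 := by
      rw [exchange_add_single v (exchange_apply_ne_zero q hup.symm hu), add_right_comm]
    _ = exchange (exchange c p q) u v + (single p 1 + single u 1) := by
      rw [add_assoc, add_comm (single u 1)]

theorem sum_exchange_add_ite [DecidableEq ι] {a : ι →₀ ℕ} {i : ι} (A : Finset ι) (j : ι)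
    (h : a i ≠ 0) :
    ∑ x ∈ A, exchange a i j x + (if i ∈ A then 1 else 0) =
      ∑ x ∈ A, a x + (if j ∈ A then 1 else 0) := by
  simpa [sum_add_distrib, single_apply] using
    congrArg (fun f : ι →₀ ℕ => ∑ x ∈ A, f x) (exchange_add_single j h)

end Exchange

section SerialExchange

variable {B : Set (ι →₀ ℕ)} {c : ι →₀ ℕ} {p q u v : ι}

/-- Exchanging at `p` from `exchange c u v` towards `exchange c p q` can only move the unit
to `q` or back to `u`. -/
theorem HasExchange.exchange_exchange_mem_or (hB : HasExchange B) (hu : exchange c u v ∈ B)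
    (hp : exchange c p q ∈ B) (hcu : c u ≠ 0) (hcp : c p ≠ 0) (hpu : p ≠ u) (hpv : p ≠ v)
    (hpq : p ≠ q) :
    exchange (exchange c u v) p q ∈ B ∨ exchange c p v ∈ B := by
  classical
  obtain ⟨j, hj, hmem⟩ := hB _ hu _ hp p <| by
    simp [exchange_apply, hpu.symm, hpv.symm, hpq.symm]
    omega
  have hj' : j = q ∨ j = u := by
    by_contra! h
    simp only [exchange_apply] at hj
    split_ifs at hj <;> simp_all
    omega
  rcases hj' with rfl | rfl
  · exact .inl hmem
  · exact .inr (exchange_exchange hcu hcp hpu.symm ▸ hmem)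

end SerialExchange

noncomputable def rank (B : Set (ι →₀ ℕ)) (A : Finset ι) : ℕ :=
  sSup ((fun b => ∑ i ∈ A, b i) '' B)

section Rank

variable {B : Set (ι →₀ ℕ)} {d k : ℕ} {w : ι →₀ ℕ}

theorem degree_eq_of_mem_nsmul (hd : ∀ b ∈ B, b.degree = d) (hw : w ∈ k • B) :
    w.degree = k * d := by
  obtain ⟨f, hf, rfl⟩ := Set.mem_nsmul_iff_sum.mp hw
  simp [map_sum, hd _ (hf _)]

variable [Fintype ι]

theorem sum_le_degree (A : Finset ι) (b : ι →₀ ℕ) : ∑ i ∈ A, b i ≤ b.degree := by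
  rw [degree_eq_sum]
  exact sum_le_sum_of_subset A.subset_univ

theorem bddAbove_image_sum (hd : ∀ b ∈ B, b.degree = d) (A : Finset ι) :
    BddAbove ((fun b => ∑ i ∈ A, b i) '' B) :=
  ⟨d, by rintro _ ⟨b, hb, rfl⟩; exact hd b hb ▸ sum_le_degree A b⟩

theorem sum_le_rank (hd : ∀ b ∈ B, b.degree = d) {b : ι →₀ ℕ} (hb : b ∈ B) (A : Finset ι) :
    ∑ i ∈ A, b i ≤ rank B A :=
  le_csSup (bddAbove_image_sum hd A) ⟨b, hb, rfl⟩

theorem exists_sum_eq_rank (hne : B.Nonempty) (hd : ∀ b ∈ B, b.degree = d) (A : Finset ι) :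
    ∃ b ∈ B, ∑ i ∈ A, b i = rank B A :=
  Nat.sSup_mem (hne.image _) (bddAbove_image_sum hd A)

theorem sum_le_mul_rank_of_mem_nsmul (hd : ∀ b ∈ B, b.degree = d) (hw : w ∈ k • B)
    (A : Finset ι) : ∑ i ∈ A, w i ≤ k * rank B A := by
  obtain ⟨f, hf, rfl⟩ := Set.mem_nsmul_iff_sum.mp hw
  calc ∑ i ∈ A, (∑ l, f l) i = ∑ l, ∑ i ∈ A, f l i := by
        simp only [finsetSum_apply]; exact sum_comm
    _ ≤ ∑ _l : Fin k, rank B A := sum_le_sum fun l _ => sum_le_rank hd (hf l) A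
    _ = k * rank B A := by simp

/-- Testing `a + v ≥ w ∈ (k+1) • B` against a `v` of maximal weight on `A`. -/
theorem mul_le_sum_compl_add_mul_rank [DecidableEq ι] (hne : B.Nonempty)
    (hd : ∀ b ∈ B, b.degree = d) {a : ι →₀ ℕ} (h : ∀ v ∈ B, ∃ w ∈ (k + 1) • B, w ≤ a + v)
    (A : Finset ι) : k * d ≤ ∑ i ∈ Aᶜ, a i + k * rank B A := by
  obtain ⟨v, hv, hvA⟩ := exists_sum_eq_rank hne hd A
  obtain ⟨w, hw, hwle⟩ := h v hv
  have hw_split : ∑ i ∈ A, w i + ∑ i ∈ Aᶜ, w i = (k + 1) * d := by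
    rw [sum_add_sum_compl, ← degree_eq_sum, degree_eq_of_mem_nsmul hd hw]
  have hv_split : ∑ i ∈ A, v i + ∑ i ∈ Aᶜ, v i = d := by
    rw [sum_add_sum_compl, ← degree_eq_sum, hd v hv]
  have hwA := sum_le_mul_rank_of_mem_nsmul hd hw A
  have hwAc : ∑ i ∈ Aᶜ, w i ≤ ∑ i ∈ Aᶜ, a i + ∑ i ∈ Aᶜ, v i := by
    rw [← sum_add_distrib]
    exact sum_le_sum fun i _ => hwle i
  rw [add_mul, one_mul] at hw_split hwA
  omega

theorem degree_exchange_sub_lt [DecidableEq ι] {a b : ι →₀ ℕ} {u j : ι} (hu : a u < b u)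
    (hj : b j < a j) : (exchange b u j - a).degree < (b - a).degree := by
  have huj : u ≠ j := by rintro rfl; omega
  simp only [degree_eq_sum, tsub_apply]
  refine sum_lt_sum (fun x _ => ?_) ⟨u, mem_univ u, ?_⟩
  · rw [exchange_apply]
    split_ifs <;> subst_vars <;> omega
  · simp [exchange_apply, huj.symm]
    omega

/-- A base closest to `a` among those of maximal weight on `T` agrees with `a` off `T`: at a
coordinate `u ∉ T` where it exceeds `a`, exchanging towards `a` keeps it maximal and brings it
closer, while at a coordinate `p ∉ T` where `a` exceeds it, exchanging `a` towards it would leave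
`Tᶜ`. -/
theorem HasExchange.sum_eq_rank [DecidableEq ι] (hB : HasExchange B) (hd : ∀ b ∈ B, b.degree = d)
    {a : ι →₀ ℕ} (ha : a ∈ B) {T : Finset ι}
    (hT : ∀ p q, p ∉ T → a p ≠ 0 → exchange a p q ∈ B → q ∉ T) :
    ∑ i ∈ T, a i = rank B T := by
  set W := {b ∈ B | rank B T ≤ ∑ i ∈ T, b i}
  have hW : W.Nonempty :=
    let ⟨b, hb, hbT⟩ := exists_sum_eq_rank ⟨a, ha⟩ hd T
    ⟨b, hb, hbT.ge⟩
  obtain ⟨hb, hbT⟩ : Function.argminOn (fun b => (b - a).degree) W hW ∈ W :=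
    Function.argminOn_mem _ _ _
  set b := Function.argminOn (fun b => (b - a).degree) W hW
  have hlt : ∀ u, a u < b u → u ∈ T := by
    intro u hu
    by_contra huT
    obtain ⟨j, hj, hjB⟩ := hB b hb a ha u hu
    have hjW : exchange b u j ∈ W := by
      refine ⟨hjB, ?_⟩
      have := sum_exchange_add_ite T j (by omega : b u ≠ 0)
      simp only [huT, if_false] at this
      split_ifs at this <;> omega
    exact (Function.argminOn_le (fun b => (b - a).degree) W hjW).not_gt
      (degree_exchange_sub_lt hu hj)
  have hgt : ∀ p, b p < a p → p ∈ T := by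
    intro p hp
    by_contra hpT
    obtain ⟨j, hj, hjB⟩ := hB a ha b hb p hp
    exact hT p j hpT (by omega) hjB (hlt j hj)
  have hcompl : ∑ i ∈ Tᶜ, b i = ∑ i ∈ Tᶜ, a i := by
    refine sum_congr rfl fun x hx => ?_
    have := mt (hlt x)
    have := mt (hgt x)
    simp_all only [mem_compl, not_false_eq_true, not_lt, forall_const]
    omega
  have hb_split := sum_add_sum_compl T b
  have ha_split := sum_add_sum_compl T a
  rw [← degree_eq_sum, hd b hb] at hb_split
  rw [← degree_eq_sum, hd a ha] at ha_split
  have := sum_le_rank hd hb T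
  omega

end Rank

section Overlap

variable [DecidableEq ι] {S S' m : ι →₀ ℕ} {p q : ι}

theorem add_ite_eq_of_add_single_eq (h : S' + single p 1 = S + single q 1) (x : ι) :
    S' x + (if p = x then 1 else 0) = S x + (if q = x then 1 else 0) := by
  simpa [single_apply] using DFunLike.congr_fun h x

variable [Fintype ι]

theorem degree_inf_eq_of_add_single_eq (h : S' + single p 1 = S + single q 1) (hp : m p < S p)
    (hq : m q ≤ S q) : (S' ⊓ m).degree = (S ⊓ m).degree := by
  simp only [degree_eq_sum, inf_apply]
  refine sum_congr rfl fun x _ => ?_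
  have hx := add_ite_eq_of_add_single_eq h x
  split_ifs at hx <;> subst_vars <;> omega

theorem degree_inf_lt_of_add_single_eq (h : S' + single p 1 = S + single q 1) (hp : m p < S p)
    (hq : S q < m q) : (S ⊓ m).degree < (S' ⊓ m).degree := by
  simp only [degree_eq_sum, inf_apply]
  refine sum_lt_sum (fun x _ => ?_) ⟨q, mem_univ q, ?_⟩
  · have hx := add_ite_eq_of_add_single_eq h x
    split_ifs at hx <;> subst_vars <;> omega
  · have hpq : p ≠ q := by rintro rfl; omega
    have hx := add_ite_eq_of_add_single_eq h q
    simp only [hpq, if_false, if_true] at hx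
    omega

end Overlap

section AugmentingPath

variable {κ : Type*} (B : Set (ι →₀ ℕ)) (m : ι →₀ ℕ)

def Arc (σ : κ → ι →₀ ℕ) (p q : ι) : Prop :=
  ∃ l, σ l p ≠ 0 ∧ exchange (σ l) p q ∈ B

variable [Fintype κ]

noncomputable def overlap (σ : κ → ι →₀ ℕ) : ℕ := ((∑ l, σ l) ⊓ m).degree

structure IsAugmentingPath (σ : κ → ι →₀ ℕ) (c : ℕ → ι) (t : ℕ) : Prop where
  excess : m (c 0) < (∑ l, σ l) (c 0)
  arc : ∀ s < t, Arc B σ (c s) (c (s + 1))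
  deficit : (∑ l, σ l) (c t) < m (c t)

def IsShortestAugmentingPath (σ : κ → ι →₀ ℕ) (c : ℕ → ι) (t : ℕ) : Prop :=
  IsAugmentingPath B m σ c t ∧ ∀ t' < t, ∀ c' : ℕ → ι, ¬ IsAugmentingPath B m σ c' t'

inductive Reachable (σ : κ → ι →₀ ℕ) : ι → Prop
  | excess {p : ι} : m p < (∑ l, σ l) p → Reachable σ p
  | arc {p q : ι} : Reachable σ p → Arc B σ p q → Reachable σ q

variable {B m} {σ : κ → ι →₀ ℕ} {c : ℕ → ι} {t : ℕ}

theorem Reachable.exists_chain {q : ι} (h : Reachable B m σ q) :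
    ∃ (t : ℕ) (c : ℕ → ι), m (c 0) < (∑ l, σ l) (c 0) ∧
      (∀ s < t, Arc B σ (c s) (c (s + 1))) ∧ c t = q := by
  induction h with
  | excess hp => exact ⟨0, fun _ => _, hp, by simp, rfl⟩
  | @arc p q _ hpq ih =>
    obtain ⟨t, c, h0, hc, rfl⟩ := ih
    refine ⟨t + 1, fun s => if s ≤ t then c s else q, by simpa using h0, fun s hs => ?_, by simp⟩
    rcases Nat.lt_succ_iff_lt_or_eq.mp hs with hs | rfl
    · simpa [hs.le, Nat.succ_le_of_lt hs] using hc s hs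
    · simpa using hpq

namespace IsAugmentingPath

theorem take (hc : IsAugmentingPath B m σ c t) {a : ℕ} (hat : a ≤ t)
    (ha : (∑ l, σ l) (c a) < m (c a)) : IsAugmentingPath B m σ c a where
  excess := hc.excess
  arc s hs := hc.arc s (by omega)
  deficit := ha

theorem shortcut (hc : IsAugmentingPath B m σ c t) {a b : ℕ} (hab : a < b) (hbt : b ≤ t)
    (harc : Arc B σ (c a) (c b)) :
    IsAugmentingPath B m σ (fun r => if r ≤ a then c r else c (r + (b - a - 1)))
      (t - (b - a - 1)) where
  excess := by simpa using hc.excess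
  arc s hs := by
    rcases lt_trichotomy s a with h | rfl | h
    · simpa [h.le, Nat.succ_le_of_lt h] using hc.arc s (by omega)
    · simpa [show s + 1 + (b - s - 1) = b by omega] using harc
    · simpa [show ¬ s ≤ a by omega, show ¬ s < a by omega,
        show s + 1 + (b - a - 1) = s + (b - a - 1) + 1 by omega] using
        hc.arc (s + (b - a - 1)) (by omega)
  deficit := by
    simpa [show ¬ t - (b - a - 1) ≤ a by omega, show t - (b - a - 1) + (b - a - 1) = t by omega]
      using hc.deficit

end IsAugmentingPath

namespace IsShortestAugmentingPath

theorem le_sum_apply (hc : IsShortestAugmentingPath B m σ c t) {a : ℕ} (hat : a < t) :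
    m (c a) ≤ (∑ l, σ l) (c a) :=
  not_lt.mp fun h => hc.2 a hat _ (hc.1.take hat.le h)

theorem not_arc (hc : IsShortestAugmentingPath B m σ c t) {a b : ℕ} (hab : a + 2 ≤ b)
    (hbt : b ≤ t) : ¬ Arc B σ (c a) (c b) :=
  fun h => hc.2 _ (by omega) _ (hc.1.shortcut (by omega) hbt h)

theorem apply_ne (hc : IsShortestAugmentingPath B m σ c t) {a b : ℕ} (hab : a < b)
    (hbt : b ≤ t) : c a ≠ c b := by
  intro h
  rcases hbt.lt_or_eq with hbt | rfl
  · exact hc.not_arc (by omega : a + 2 ≤ b + 1) hbt (h ▸ hc.1.arc b hbt)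
  · exact (hc.le_sum_apply hab).not_gt (h ▸ hc.1.deficit)

end IsShortestAugmentingPath

theorem sum_update_exchange_add_single [DecidableEq κ] {l : κ} {p : ι} (q : ι) (h : σ l p ≠ 0) :
    ∑ l', Function.update σ l (exchange (σ l) p q) l' + single p 1 = ∑ l', σ l' + single q 1 := by
  rw [sum_update_of_mem (mem_univ l), sdiff_singleton_eq_erase, ← add_sum_erase _ σ (mem_univ l),
    add_right_comm, exchange_add_single q h, add_right_comm]

/-- A broken arc would yield an arc from `c 0` skipping `c 1`, against minimality. -/
theorem IsShortestAugmentingPath.arc_update_exchange [DecidableEq κ] (hB : HasExchange B)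
    (hc : IsShortestAugmentingPath B m σ c t) {l₀ : κ} (h0 : σ l₀ (c 0) ≠ 0)
    (h01 : exchange (σ l₀) (c 0) (c 1) ∈ B) {s : ℕ} (hs : 1 ≤ s) (hst : s < t) :
    Arc B (Function.update σ l₀ (exchange (σ l₀) (c 0) (c 1))) (c s) (c (s + 1)) := by
  obtain ⟨l, hl, hlB⟩ := hc.1.arc s hst
  by_cases hl₀ : l = l₀
  swap
  · rw [← Function.update_of_ne hl₀ (exchange (σ l₀) (c 0) (c 1)) σ] at hl hlB
    exact ⟨l, hl, hlB⟩
  subst hl₀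
  have h0s : c 0 ≠ c s := hc.apply_ne (by omega) hst.le
  have hshort : exchange (σ l) (c 0) (c (s + 1)) ∉ B :=
    fun h => hc.not_arc (by omega : 0 + 2 ≤ s + 1) hst ⟨l, h0, h⟩
  rcases hB.exchange_exchange_mem_or hlB h01 hl h0 h0s
      (hc.apply_ne (by omega) hst) (hc.apply_ne zero_lt_one (by omega)) with h | h
  · rcases hs.eq_or_lt with rfl | hs
    · exact absurd (exchange_exchange hl h0 h0s.symm ▸ h) hshort
    · refine ⟨l, by simpa using exchange_apply_ne_zero (c 1) h0s hl, ?_⟩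
      simpa [exchange_comm hl h0 h0s.symm] using h
  · exact absurd h hshort

variable [DecidableEq ι]

theorem IsShortestAugmentingPath.isAugmentingPath_update_exchange [DecidableEq κ]
    (hB : HasExchange B) (hc : IsShortestAugmentingPath B m σ c t) (ht : 2 ≤ t) {l₀ : κ}
    (h0 : σ l₀ (c 0) ≠ 0) (h01 : exchange (σ l₀) (c 0) (c 1) ∈ B) :
    IsAugmentingPath B m (Function.update σ l₀ (exchange (σ l₀) (c 0) (c 1))) (fun r => c (r + 1))
      (t - 1) := by
  have hS := add_ite_eq_of_add_single_eq (sum_update_exchange_add_single (c 1) h0)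
  refine ⟨?_, fun s hs => hc.arc_update_exchange hB h0 h01 (by omega) (by omega), ?_⟩
  · have h := hS (c 1)
    simp only [hc.apply_ne zero_lt_one (by omega), if_false, if_true] at h
    have := hc.le_sum_apply (a := 1) (by omega)
    simp only [zero_add]
    omega
  · have h := hS (c t)
    simp only [hc.apply_ne (by omega : 0 < t) le_rfl, hc.apply_ne (by omega : 1 < t) le_rfl,
      if_false, Nat.sub_add_cancel (by omega : 1 ≤ t)] at h ⊢
    have := hc.1.deficit
    omega

variable [Fintype ι]

theorem exists_overlap_lt_of_isAugmentingPath (hB : HasExchange B) (hσ : ∀ l, σ l ∈ B)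
    (hc : IsAugmentingPath B m σ c t) :
    ∃ σ' : κ → ι →₀ ℕ, (∀ l, σ' l ∈ B) ∧ overlap m σ < overlap m σ' := by
  classical
  induction t using Nat.strong_induction_on generalizing σ c with
  | _ t ih =>
  by_cases hshorter : ∃ t' < t, ∃ c', IsAugmentingPath B m σ c' t'
  · obtain ⟨t', ht', c', hc'⟩ := hshorter
    exact ih t' ht' hσ hc'
  push Not at hshorter
  have hc : IsShortestAugmentingPath B m σ c t := ⟨hc, hshorter⟩
  have ht : t ≠ 0 := by
    rintro rfl
    exact (hc.1.excess.trans hc.1.deficit).false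
  obtain ⟨l₀, h0, h01⟩ := hc.1.arc 0 (by omega)
  have hσ' : ∀ l, Function.update σ l₀ (exchange (σ l₀) (c 0) (c 1)) l ∈ B :=
    Function.forall_update_iff σ (p := fun _ b => b ∈ B) |>.mpr ⟨h01, fun l _ => hσ l⟩
  have hS := sum_update_exchange_add_single (c 1) h0
  rcases (by omega : t = 1 ∨ 2 ≤ t) with rfl | ht2
  · exact ⟨_, hσ', degree_inf_lt_of_add_single_eq hS hc.1.excess hc.1.deficit⟩
  · obtain ⟨σ'', hσ'', hlt⟩ :=
      ih (t - 1) (by omega) hσ' (hc.isAugmentingPath_update_exchange hB ht2 h0 h01)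
    refine ⟨σ'', hσ'', lt_of_eq_of_lt ?_ hlt⟩
    exact (degree_inf_eq_of_add_single_eq hS hc.1.excess (hc.le_sum_apply (by omega))).symm

end AugmentingPath

section Covering

variable [Fintype ι] {κ : Type*} [Fintype κ]

theorem overlap_le (m : ι →₀ ℕ) (σ : κ → ι →₀ ℕ) : overlap m σ ≤ m.degree := by
  simp only [overlap, degree_eq_sum, inf_apply]
  exact sum_le_sum fun x _ => inf_le_right

variable [DecidableEq ι] {B : Set (ι →₀ ℕ)} {d : ℕ} {m : ι →₀ ℕ}

/-- Without an augmenting path, every coordinate reachable from an excess one is saturated, and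
each part attains the rank of the unreachable coordinates; counting over the reachable ones then
contradicts the rank condition. -/
theorem exists_overlap_lt (hB : HasExchange B) (hd : ∀ b ∈ B, b.degree = d)
    (hrank : ∀ A : Finset ι, Fintype.card κ * d ≤ ∑ i ∈ Aᶜ, m i + Fintype.card κ * rank B A)
    {σ : κ → ι →₀ ℕ} (hσ : ∀ l, σ l ∈ B) (hσm : ¬ ∑ l, σ l ≤ m) :
    ∃ σ' : κ → ι →₀ ℕ, (∀ l, σ' l ∈ B) ∧ overlap m σ < overlap m σ' := by
  classical
  by_contra hno
  have hsat : ∀ q, Reachable B m σ q → m q ≤ (∑ l, σ l) q := by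
    intro q hq
    by_contra! hlt
    obtain ⟨t, c, h0, harc, rfl⟩ := hq.exists_chain
    exact hno (exists_overlap_lt_of_isAugmentingPath hB hσ ⟨h0, harc, hlt⟩)
  obtain ⟨x₀, hx₀⟩ : ∃ x, m x < (∑ l, σ l) x := by
    simpa [Finsupp.le_def] using hσm
  set R := univ.filter (Reachable B m σ)
  have hpart : ∀ l, ∑ i ∈ R, σ l i + rank B Rᶜ = d := by
    intro l
    rw [← hB.sum_eq_rank hd (hσ l), sum_add_sum_compl, ← degree_eq_sum, hd _ (hσ l)]
    intro p q hp hl hmem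
    simp only [R, mem_compl, mem_filter, mem_univ, true_and, not_not] at hp ⊢
    exact hp.arc ⟨l, hl, hmem⟩
  have hcount : ∑ i ∈ R, (∑ l, σ l) i + Fintype.card κ * rank B Rᶜ = Fintype.card κ * d :=
    calc ∑ i ∈ R, (∑ l, σ l) i + Fintype.card κ * rank B Rᶜ
        = ∑ l, (∑ i ∈ R, σ l i + rank B Rᶜ) := by
          simp [finsetSum_apply, sum_add_distrib, Finset.sum_comm (s := R)]
      _ = Fintype.card κ * d := by simp [hpart]
  have hlt : ∑ i ∈ R, m i < ∑ i ∈ R, (∑ l, σ l) i :=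
    sum_lt_sum (fun x hx => hsat x (mem_filter.mp hx).2)
      ⟨x₀, mem_filter.mpr ⟨mem_univ _, Reachable.excess hx₀⟩, hx₀⟩
  have := hrank Rᶜ
  rw [compl_compl] at this
  omega

theorem exists_sum_le_of_rank (hB : HasExchange B) (hne : B.Nonempty)
    (hd : ∀ b ∈ B, b.degree = d)
    (hrank : ∀ A : Finset ι, Fintype.card κ * d ≤ ∑ i ∈ Aᶜ, m i + Fintype.card κ * rank B A) :
    ∃ σ : κ → ι →₀ ℕ, (∀ l, σ l ∈ B) ∧ ∑ l, σ l ≤ m := by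
  obtain ⟨b₀, hb₀⟩ := hne
  suffices h : ∀ N, ∀ σ : κ → ι →₀ ℕ, (∀ l, σ l ∈ B) → m.degree - overlap m σ = N →
      ∃ σ : κ → ι →₀ ℕ, (∀ l, σ l ∈ B) ∧ ∑ l, σ l ≤ m from h _ _ (fun _ => hb₀) rfl
  intro N
  induction N using Nat.strong_induction_on with
  | _ N ih =>
  rintro σ hσ rfl
  by_cases hσm : ∑ l, σ l ≤ m
  · exact ⟨σ, hσ, hσm⟩
  obtain ⟨σ', hσ', hlt⟩ := exists_overlap_lt hB hd hrank hσ hσm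
  exact ih _ (by have := overlap_le m σ'; omega) σ' hσ' rfl

theorem exists_mem_nsmul_le_of_forall_exists_mem_nsmul_le_add (hB : HasExchange B)
    (hne : B.Nonempty) (hd : ∀ b ∈ B, b.degree = d) {k : ℕ} {a : ι →₀ ℕ}
    (h : ∀ v ∈ B, ∃ w ∈ (k + 1) • B, w ≤ a + v) :
    ∃ w ∈ k • B, w ≤ a := by
  obtain ⟨σ, hσ, hle⟩ := exists_sum_le_of_rank (κ := Fin k) hB hne hd
    (by simpa using mul_le_sum_compl_add_mul_rank hne hd h)
  exact ⟨_, Set.mem_nsmul_iff_sum.mpr ⟨σ, hσ, rfl⟩, hle⟩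

end Covering

end Polymatroid

theorem MvPolynomial.span_monomial_image_pow {σ R : Type*} [CommSemiring R] (B : Set (σ →₀ ℕ))
    (k : ℕ) : Ideal.span ((fun a => monomial a (1 : R)) '' B) ^ k =
      Ideal.span ((fun a => monomial a (1 : R)) '' (k • B)) := by
  induction k with
  | zero => simp
  | succ k ih =>
    rw [pow_succ, ih, Ideal.span_mul_span', succ_nsmul]
    congr 1
    ext x
    simp [Set.mem_mul, Set.mem_add, monomial_mul]

theorem Ideal.mem_associatedPrimes_quotient_iff {R : Type*} [CommRing R] [IsNoetherianRing R]
    {J P : Ideal R} : P ∈ associatedPrimes R (R ⧸ J) ↔ P.IsPrime ∧ ∃ f : R, P = J.colon {f} := by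
  have hcolon (f : R) : (⊥ : Submodule R (R ⧸ J)).colon {Ideal.Quotient.mk J f} = J.colon {f} := by
    ext r
    rw [Submodule.mem_colon_singleton, Submodule.mem_colon_singleton, Submodule.mem_bot,
      Algebra.smul_def, smul_eq_mul, Ideal.Quotient.algebraMap_eq, ← map_mul,
      Ideal.Quotient.eq_zero_iff_mem]
  rw [AssociatedPrimes.mem_iff, isAssociatedPrime_iff, Ideal.Quotient.mk_surjective.exists]
  simp_rw [hcolon]

theorem Ideal.associatedPrimes_quotient_subset_mul {R : Type*} [CommRing R] [IsNoetherianRing R]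
    {I J : Ideal R} (h : (J * I).colon I = J) :
    associatedPrimes R (R ⧸ J) ⊆ associatedPrimes R (R ⧸ J * I) := by
  intro P hP
  rw [Ideal.mem_associatedPrimes_quotient_iff] at hP ⊢
  obtain ⟨hP, f, rfl⟩ := hP
  obtain ⟨G, hG⟩ := I.fg_of_isNoetherianRing
  have hle : ∀ g ∈ G, J.colon {f} ≤ (J * I).colon {f * g} := fun g hg r hr => by
    rw [Submodule.mem_colon_singleton, smul_eq_mul] at hr ⊢
    rw [← mul_assoc]
    exact Ideal.mul_mem_mul hr (hG ▸ Ideal.subset_span hg)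
  have hinf : G.inf (fun g => (J * I).colon {f * g}) ≤ J.colon {f} := fun r hr => by
    rw [Submodule.mem_finsetInf] at hr
    have hGJ : (J * I).colon (G : Set R) = J := by rw [← Ideal.colon_span, hG, h]
    rw [Submodule.mem_colon_singleton, smul_eq_mul, ← hGJ, Submodule.mem_colon]
    intro g hg
    simpa [mul_assoc] using hr g hg
  obtain ⟨g, hg, hgle⟩ := hP.inf_le'.mp hinf
  exact ⟨hP, f * g, le_antisymm (hle g hg) hgle⟩

namespace Polymatroid

variable {ι R : Type*} [CommSemiring R] {B : Set (ι →₀ ℕ)} {d : ℕ}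

theorem colon_pow_succ [Fintype ι] [DecidableEq ι] (hB : HasExchange B) (hne : B.Nonempty)
    (hd : ∀ b ∈ B, b.degree = d) {I : Ideal (MvPolynomial ι R)}
    (hI : I = Ideal.span ((fun a => monomial a (1 : R)) '' B)) (k : ℕ) :
    (I ^ (k + 1)).colon (I : Set (MvPolynomial ι R)) = I ^ k := by
  refine le_antisymm (fun r hr => ?_) (fun r hr => Submodule.mem_colon.mpr fun s hs => ?_)
  · have hmul : ∀ v ∈ B, r * monomial v 1 ∈ I ^ (k + 1) := fun v hv =>
      Submodule.mem_colon.mp hr _ (hI ▸ Ideal.subset_span ⟨v, hv, rfl⟩)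
    simp only [hI, span_monomial_image_pow, mem_ideal_span_monomial_image] at hmul ⊢
    intro a ha
    refine exists_mem_nsmul_le_of_forall_exists_mem_nsmul_le_add hB hne hd fun v hv => ?_
    refine hmul v hv (a + v) ?_
    rwa [MvPolynomial.mem_support_iff, coeff_mul_monomial, mul_one, ← MvPolynomial.mem_support_iff]
  · rw [pow_succ]
    exact Ideal.mul_mem_mul hr hs

end Polymatroid

theorem IsPolymatroidal.exists_hasExchange {n : ℕ} {K : Type*} [Field K]
    {I : Ideal (MvPolynomial (Fin n) K)} (hI : IsPolymatroidal I) :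
    ∃ (d : ℕ) (B : Set (Fin n →₀ ℕ)), Polymatroid.HasExchange B ∧ B.Nonempty ∧
      (∀ b ∈ B, b.degree = d) ∧ I = Ideal.span ((fun a => monomial a (1 : K)) '' B) := by
  obtain ⟨d, G, hGne, hGd, hIG, hex⟩ := hI
  have hGI : ∀ g ∈ G, monomial g (1 : K) ∈ I := fun g hg => hIG ▸ Ideal.subset_span ⟨g, hg, rfl⟩
  refine ⟨d, {a | a.degree = d ∧ monomial a 1 ∈ I}, ?_, ?_, fun b hb => hb.1, ?_⟩
  · rintro a ⟨ha, haI⟩ b ⟨hb, hbI⟩ i hi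
    obtain ⟨j, hj, hjI⟩ := hex a b ha hb haI hbI i hi
    exact ⟨j, hj, (Polymatroid.degree_exchange j (by omega)).trans ha, hjI⟩
  · exact hGne.mono fun g hg => ⟨hGd g hg, hGI g hg⟩
  · refine le_antisymm ?_ (Ideal.span_le.mpr ?_)
    · exact hIG.trans_le (Ideal.span_mono (Set.image_mono fun g hg => ⟨hGd g hg, hGI g hg⟩))
    · rintro _ ⟨b, hb, rfl⟩
      exact hb.2

theorem polymatroidal_ass_pow_subset_general {n : ℕ} {K : Type*} [Field K]
    (I : Ideal (MvPolynomial (Fin n) K)) (hI : IsPolymatroidal I)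
    (k : ℕ) :
    associatedPrimes (MvPolynomial (Fin n) K) (MvPolynomial (Fin n) K ⧸ I ^ k) ⊆
      associatedPrimes (MvPolynomial (Fin n) K) (MvPolynomial (Fin n) K ⧸ I ^ (k + 1)) := by
  obtain ⟨d, B, hB, hne, hd, hIB⟩ := hI.exists_hasExchange
  rw [pow_succ]
  apply Ideal.associatedPrimes_quotient_subset_mul
  rw [← pow_succ]
  exact Polymatroid.colon_pow_succ hB hne hd hIB k

/-- For a polymatroidal ideal `I` one has `Ass(R/I^k) ⊆ Ass(R/I^{k+1})` for all `k > 0`. -/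
theorem polymatroidal_ass_pow_subset {n : ℕ} {K : Type*} [Field K]
    (I : Ideal (MvPolynomial (Fin n) K)) (hI : IsPolymatroidal I)
    (k : ℕ) (hk : 0 < k) :
    associatedPrimes (MvPolynomial (Fin n) K) (MvPolynomial (Fin n) K ⧸ I ^ k) ⊆
      associatedPrimes (MvPolynomial (Fin n) K) (MvPolynomial (Fin n) K ⧸ I ^ (k + 1)) :=
  polymatroidal_ass_pow_subset_general I hI k
end

section
/- Let K be a field and R = K[X_1,…,X_n]. If I is a transversal polymatroidal ideal, i.e., I = P_1⋯P_w is a product of ideals each generated by a nonempty subset of the variables X_1,…,X_n, then Ass(R/I) = Ass(R/I^k) for all integers k > 0. -/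
/-!
Write `P_A` for the ideal generated by the variables in `A` and `I_t = ∏ᵢ P_{t i}`. By Hall's
marriage theorem, `x ^ b ∈ I_t` iff `#U ≤ ∑_{j ∈ ⋃_{i ∈ U} t i} b j` for every set `U` of
factors. Hence `I_t = ⋂_A P_A ^ #{i | t i ⊆ A}`, a primary decomposition (`P_A ^ w` is primary:
tag the `A`-degree by an auxiliary variable), so each associated prime is some `P_A`, and then
equals `I_t : x ^ a` for a monomial `x ^ a`. Unwinding Hall's condition for `a`, `P_A` is
associated iff the factors inside `A` cover `A` and carry a balanced exponent: one short of the
Hall bound on `A` and meeting it on every subfamily with smaller support. With the bound `k · #U`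
in place of `#U`, a balanced exponent exists iff these factors form a connected intersection
graph, whatever `k ≥ 1`. Finally `I_t ^ k` is the transversal ideal of the family with each factor
repeated `k` times, whose balanced exponents are the multiplicity-`k` balanced exponents of the
original family, so `I_t` and `I_t ^ k` have the same associated primes.
-/

open MvPolynomial Finset Pointwise

namespace TransversalIdeal

variable {σ ι : Type*}

noncomputable def degreeOn (B : Finset σ) : (σ →₀ ℕ) →+ ℕ := ∑ j ∈ B, Finsupp.applyAddHom j

@[simp]
lemma degreeOn_apply (B : Finset σ) (a : σ →₀ ℕ) : degreeOn B a = ∑ j ∈ B, a j := by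
  simp [degreeOn]

lemma degreeOn_single [DecidableEq σ] (B : Finset σ) (l : σ) (c : ℕ) :
    degreeOn B (Finsupp.single l c) = if l ∈ B then c else 0 := by
  simp [Finsupp.single_apply]

lemma degreeOn_le_of_subset {B B' : Finset σ} (h : B ⊆ B') (a : σ →₀ ℕ) :
    degreeOn B a ≤ degreeOn B' a := by
  simpa using sum_le_sum_of_subset h

lemma degreeOn_le_of_le {a b : σ →₀ ℕ} (h : a ≤ b) (B : Finset σ) :
    degreeOn B a ≤ degreeOn B b := by
  simpa using sum_le_sum fun j _ => h j

lemma degreeOn_indicator_compl_of_subset [DecidableEq σ] [Fintype σ] {A B : Finset σ}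
    (h : B ⊆ A) (N : ℕ) : degreeOn B (Finsupp.indicator Aᶜ fun _ _ => N) = 0 := by
  simpa using fun j hj hjA => absurd (h hj) hjA

lemma le_degreeOn_indicator_compl [DecidableEq σ] [Fintype σ] {A B : Finset σ} {j : σ}
    (hjB : j ∈ B) (hjA : j ∉ A) (N : ℕ) : N ≤ degreeOn B (Finsupp.indicator Aᶜ fun _ _ => N) := by
  rw [degreeOn_apply]
  exact le_of_eq_of_le (by simp [hjA]) (single_le_sum (fun _ _ => Nat.zero_le _) hjB)

lemma biUnion_const_of_nonempty [DecidableEq σ] {U : Finset ι} (hU : U.Nonempty) (A : Finset σ) :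
    U.biUnion (fun _ => A) = A := by
  ext j
  simp [hU.exists_mem]

lemma biUnion_product_univ [DecidableEq σ] {t : ι → Finset σ} {k : ℕ} (hk : 0 < k) (U : Finset ι) :
    (U ×ˢ (univ : Finset (Fin k))).biUnion (fun p => t p.1) = U.biUnion t := by
  ext j
  simp only [mem_biUnion, mem_product, mem_univ, and_true, Prod.exists]
  exact ⟨fun ⟨i, _, hi, hj⟩ => ⟨i, hi, hj⟩, fun ⟨i, hi, hj⟩ => ⟨i, ⟨0, hk⟩, hi, hj⟩⟩

section Hall

variable [DecidableEq σ] (t : ι → Finset σ)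

def HallCondition (a : σ →₀ ℕ) : Prop := ∀ U : Finset ι, #U ≤ degreeOn (U.biUnion t) a

variable [Fintype ι]

def supportedFactors (A : Finset σ) : Finset ι := {i | t i ⊆ A}

variable {t}

lemma hallCondition_of_le {j : ι → σ} (hj : ∀ i, j i ∈ t i) {a : σ →₀ ℕ}
    (ha : ∑ i, Finsupp.single (j i) 1 ≤ a) : HallCondition t a := by
  intro U
  refine le_trans ?_ (degreeOn_le_of_le ha _)
  rw [map_sum]
  calc #U = ∑ i ∈ U, degreeOn (U.biUnion t) (Finsupp.single (j i) 1) := by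
        rw [card_eq_sum_ones]
        refine sum_congr rfl fun i hi => ?_
        rw [degreeOn_single, if_pos (mem_biUnion.mpr ⟨i, hi, hj i⟩)]
    _ ≤ _ := sum_le_sum_of_subset (subset_univ U)

/-- Hall's marriage theorem, applied to `a j` copies of each variable `j`. -/
lemma exists_le_of_hallCondition {a : σ →₀ ℕ} (h : HallCondition t a) :
    ∃ j : ι → σ, (∀ i, j i ∈ t i) ∧ ∑ i, Finsupp.single (j i) 1 ≤ a := by
  set T : ι → Finset ((_ : σ) × ℕ) := fun i => (t i).sigma fun j => range (a j)
  have hT : ∀ U : Finset ι, #U ≤ #(U.biUnion T) := fun U => by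
    have : U.biUnion T = (U.biUnion t).sigma fun j => range (a j) := by
      ext ⟨j, r⟩
      simp only [T, mem_biUnion, mem_sigma]
      tauto
    simpa [this, card_sigma] using h U
  obtain ⟨f, hf, hfT⟩ := (all_card_le_biUnion_card_iff_exists_injective T).mp hT
  refine ⟨fun i => (f i).1, fun i => (mem_sigma.mp (hfT i)).1, fun l => ?_⟩
  have hcount : (∑ i, Finsupp.single (f i).1 1) l = #{i | (f i).1 = l} := by
    simp [Finsupp.finsetSum_apply, Finsupp.single_apply]
  rw [hcount]
  calc #{i | (f i).1 = l} ≤ #(range (a l)) := by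
        refine card_le_card_of_injOn (fun i => (f i).2) (fun i hi => ?_) fun i hi i' hi' h => ?_
        · simp only [coe_filter, mem_univ, true_and, Set.mem_ofPred_eq] at hi
          simpa [hi] using (mem_sigma.mp (hfT i)).2
        · simp only [coe_filter, mem_univ, true_and, Set.mem_ofPred_eq] at hi hi'
          exact hf (Sigma.ext (hi.trans hi'.symm) (heq_of_eq h))
    _ = a l := card_range _

lemma exists_le_iff_hallCondition {a : σ →₀ ℕ} :
    (∃ j : ι → σ, (∀ i, j i ∈ t i) ∧ ∑ i, Finsupp.single (j i) 1 ≤ a) ↔ HallCondition t a :=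
  ⟨fun ⟨_, hj, ha⟩ => hallCondition_of_le hj ha, exists_le_of_hallCondition⟩

lemma hallCondition_const_iff {A : Finset σ} {w : ℕ} {b : σ →₀ ℕ} :
    HallCondition (fun _ : Fin w => A) b ↔ w ≤ degreeOn A b := by
  refine ⟨fun h => ?_, fun h U => ?_⟩
  · rcases Nat.eq_zero_or_pos w with rfl | hw
    · exact Nat.zero_le _
    · simpa [biUnion_const_of_nonempty (univ_nonempty_iff.mpr ⟨(⟨0, hw⟩ : Fin w)⟩)] using h univ
  · rcases U.eq_empty_or_nonempty with rfl | hU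
    · simp
    · rw [biUnion_const_of_nonempty hU]
      exact (card_le_univ U).trans (by simpa using h)

lemma biUnion_supportedFactors_subset {A : Finset σ} : (supportedFactors t A).biUnion t ⊆ A :=
  biUnion_subset.mpr fun _ hi => (mem_filter.mp hi).2

lemma subset_supportedFactors {A : Finset σ} {U : Finset ι} (hU : U.biUnion t ⊆ A) :
    U ⊆ supportedFactors t A :=
  fun i hi => mem_filter.mpr ⟨mem_univ i, (subset_biUnion_of_mem t hi).trans hU⟩

lemma supportedFactors_replicate {k : ℕ} {A : Finset σ} :
    supportedFactors (fun p : ι × Fin k => t p.1) A = supportedFactors t A ×ˢ univ := by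
  ext
  simp [supportedFactors]

lemma hallCondition_iff_card_supportedFactors_le {b : σ →₀ ℕ} :
    HallCondition t b ↔ ∀ A, #(supportedFactors t A) ≤ degreeOn A b :=
  ⟨fun h _ => (h _).trans (degreeOn_le_of_subset biUnion_supportedFactors_subset b),
    fun h _ => (card_le_card (subset_supportedFactors subset_rfl)).trans (h _)⟩

end Hall

section Balanced

variable [DecidableEq σ] {t : ι → Finset σ} {k : ℕ} {V U : Finset ι}
  {α : σ →₀ ℕ}

variable (t) in
def Balanced (k : ℕ) (V : Finset ι) (α : σ →₀ ℕ) : Prop :=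
  degreeOn (V.biUnion t) α + 1 = k * #V ∧
    ∀ U ⊆ V, U.biUnion t ≠ V.biUnion t → k * #U ≤ degreeOn (U.biUnion t) α

lemma Balanced.mul_card_le (h : Balanced t k V α) (hU : U ⊆ V) :
    k * #U ≤ degreeOn (U.biUnion t) α + 1 := by
  by_cases hUV : U.biUnion t = V.biUnion t
  · rw [hUV, h.1]
    exact Nat.mul_le_mul_left k (card_le_card hU)
  · exact (h.2 U hU hUV).trans (Nat.le_succ _)

lemma balanced_singleton (hk : 0 < k) {i : ι} {c : σ} (hc : c ∈ t i) :
    Balanced t k {i} (Finsupp.single c (k - 1)) := by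
  refine ⟨?_, fun U hU hne => ?_⟩
  · rw [singleton_biUnion, degreeOn_single, if_pos hc, card_singleton]
    omega
  · rcases subset_singleton_iff.mp hU with rfl | rfl
    · simp
    · exact absurd rfl hne

variable [DecidableEq ι]

-- The supports `t i`, `i ∈ V`, form a connected intersection graph.
variable (t) in
def Linked (V : Finset ι) : Prop :=
  ∀ U ⊆ V, U.Nonempty → (V \ U).Nonempty → ¬Disjoint (U.biUnion t) ((V \ U).biUnion t)

lemma Balanced.nonempty_and_linked (ht : ∀ i, (t i).Nonempty) (h : Balanced t k V α) :
    V.Nonempty ∧ Linked t V := by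
  refine ⟨nonempty_iff_ne_empty.mpr fun hV => by simpa [hV] using h.1, ?_⟩
  intro U hU hUne hVUne hdisj
  have hunion : U.biUnion t ∪ (V \ U).biUnion t = V.biUnion t := by
    rw [← union_biUnion, union_sdiff_of_subset hU]
  have hproper : ∀ W₁ W₂ : Finset ι, W₂.Nonempty → Disjoint (W₁.biUnion t) (W₂.biUnion t) →
      W₁.biUnion t ∪ W₂.biUnion t = V.biUnion t → W₁.biUnion t ≠ V.biUnion t := by
    rintro W₁ W₂ ⟨i, hi⟩ hW hW₁₂ hW₁
    obtain ⟨j, hj⟩ := ht i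
    have hjW₂ : j ∈ W₂.biUnion t := mem_biUnion.mpr ⟨i, hi, hj⟩
    have hjW₁ : j ∈ W₁.biUnion t := hW₁ ▸ hW₁₂ ▸ mem_union_right _ hjW₂
    exact disjoint_left.mp hW hjW₁ hjW₂
  have hU₁ := h.2 U hU (hproper U (V \ U) hVUne hdisj hunion)
  have hU₂ := h.2 (V \ U) sdiff_subset
    (hproper (V \ U) U hUne hdisj.symm (by rw [union_comm, hunion]))
  have hdeg : degreeOn (V.biUnion t) α =
      degreeOn (U.biUnion t) α + degreeOn ((V \ U).biUnion t) α := by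
    simp only [← hunion, degreeOn_apply, sum_union hdisj]
  have hcard : k * #V = k * #U + k * #(V \ U) := by
    rw [← mul_add, add_comm, card_sdiff_add_card_eq_card hU]
  have := h.1
  omega

lemma Balanced.insert_add_single (hk : 0 < k) (h : Balanced t k V α)
    (hsupp : ∀ j ∉ V.biUnion t, α j = 0) {i : ι} (hi : i ∉ V) {c : σ} (hc : c ∈ t i)
    (hcV : c ∈ V.biUnion t) : Balanced t k (insert i V) (α + Finsupp.single c k) := by
  have hdeg : ∀ B, degreeOn B (α + Finsupp.single c k) = degreeOn B α + if c ∈ B then k else 0 :=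
    fun B => by rw [map_add, degreeOn_single]
  have hVsub : V.biUnion t ⊆ (insert i V).biUnion t :=
    biUnion_subset_biUnion_of_subset_left t (subset_insert i V)
  refine ⟨?_, fun U hU hne => ?_⟩
  · have hαV : degreeOn ((insert i V).biUnion t) α = degreeOn (V.biUnion t) α := by
      simpa using (sum_subset hVsub fun j _ hj => hsupp j hj).symm
    rw [hdeg, if_pos (hVsub hcV), hαV, card_insert_of_notMem hi, mul_add, mul_one]
    have := h.1
    omega
  rw [hdeg]
  by_cases hiU : i ∈ U
  · have hU₀ : U.erase i ⊆ V := subset_insert_iff.mp hU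
    have hUeq : U.biUnion t = t i ∪ (U.erase i).biUnion t := by
      rw [← biUnion_insert, insert_erase hiU]
    have hne₀ : (U.erase i).biUnion t ≠ V.biUnion t := fun h₀ =>
      hne (by rw [hUeq, h₀, biUnion_insert])
    have h₀ := (h.2 _ hU₀ hne₀).trans (degreeOn_le_of_subset (hUeq ▸ subset_union_right) α)
    rw [if_pos (hUeq ▸ mem_union_left _ hc), ← card_erase_add_one hiU, mul_add, mul_one]
    omega
  · have hUV : U ⊆ V := (subset_insert_iff_of_notMem hiU).mp hU
    by_cases hcU : c ∈ U.biUnion t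
    · have := h.mul_card_le hUV
      rw [if_pos hcU]
      omega
    · rw [if_neg hcU, add_zero]
      exact h.2 U hUV fun hUV' => hcU (hUV' ▸ hcV)

lemma Linked.exists_balanced (ht : ∀ i, (t i).Nonempty) (hk : 0 < k) (hV : V.Nonempty)
    (h : Linked t V) : ∃ α, Balanced t k V α := by
  have grow : ∀ m < #V, ∃ V' ⊆ V, #V' = m + 1 ∧
      ∃ α, (∀ j ∉ V'.biUnion t, α j = 0) ∧ Balanced t k V' α := by
    intro m
    induction m with
    | zero =>
      intro _
      obtain ⟨i, hi⟩ := hV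
      obtain ⟨c, hc⟩ := ht i
      refine ⟨{i}, singleton_subset_iff.mpr hi, card_singleton i, _, fun j hj => ?_,
        balanced_singleton hk hc⟩
      rw [singleton_biUnion] at hj
      exact Finsupp.single_eq_of_ne (fun hjc => hj (hjc ▸ hc))
    | succ m ih =>
      intro hm
      obtain ⟨V', hV'V, hcard, α, hsupp, hα⟩ := ih (by omega)
      have hrest : (V \ V').Nonempty := by
        rw [← card_pos, card_sdiff_of_subset hV'V]
        omega
      obtain ⟨c, hcV', hc⟩ := not_disjoint_iff.mp
        (h V' hV'V (card_pos.mp (by omega)) hrest)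
      obtain ⟨i, hi, hci⟩ := mem_biUnion.mp hc
      obtain ⟨hiV, hiV'⟩ := mem_sdiff.mp hi
      refine ⟨insert i V', insert_subset hiV hV'V, by rw [card_insert_of_notMem hiV', hcard],
        _, fun j hj => ?_, hα.insert_add_single hk hsupp hiV' hci hcV'⟩
      have hjV' : j ∉ V'.biUnion t := fun hj' =>
        hj (biUnion_subset_biUnion_of_subset_left t (subset_insert i V') hj')
      rw [Finsupp.add_apply, hsupp j hjV',
        Finsupp.single_eq_of_ne fun (hjc : j = c) => hjV' (hjc ▸ hcV'), add_zero]
  obtain ⟨V', hV'V, hcard, α, -, hα⟩ := grow (#V - 1) (by have := hV.card_pos; omega)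
  rw [eq_of_subset_of_card_le hV'V (by have := hV.card_pos; omega)] at hα
  exact ⟨α, hα⟩

lemma exists_balanced_iff_linked (ht : ∀ i, (t i).Nonempty) (hk : 0 < k) :
    (∃ α, Balanced t k V α) ↔ V.Nonempty ∧ Linked t V :=
  ⟨fun ⟨_, hα⟩ => hα.nonempty_and_linked ht, fun ⟨hV, h⟩ => h.exists_balanced ht hk hV⟩

lemma balanced_replicate_iff (hk : 0 < k) {V : Finset ι} {α : σ →₀ ℕ} :
    Balanced (fun p : ι × Fin k => t p.1) 1 (V ×ˢ univ) α ↔ Balanced t k V α := by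
  unfold Balanced
  rw [biUnion_product_univ hk, card_product, card_univ, Fintype.card_fin, one_mul, mul_comm _ k]
  simp only [one_mul]
  refine and_congr_right fun _ => ⟨fun h U hU hne => ?_, fun h U' hU' hne => ?_⟩
  · simpa [biUnion_product_univ hk, mul_comm _ k] using
      h (U ×ˢ univ) (product_subset_product_left hU) (by rwa [biUnion_product_univ hk])
  · have hU'eq : U'.biUnion (fun p => t p.1) = (U'.image Prod.fst).biUnion t := by
      rw [image_biUnion]
    have hUV : U'.image Prod.fst ⊆ V := image_subset_iff.mpr fun p hp => (mem_product.mp (hU' hp)).1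
    have hcard : #U' ≤ k * #(U'.image Prod.fst) := by
      calc #U' ≤ #(U'.image Prod.fst ×ˢ (univ : Finset (Fin k))) :=
            card_le_card fun p hp => mem_product.mpr ⟨mem_image_of_mem _ hp, mem_univ _⟩
        _ = k * #(U'.image Prod.fst) := by simp [mul_comm]
    rw [hU'eq] at hne ⊢
    exact hcard.trans (h _ hUV hne)

end Balanced

section AssociatedExponent

variable [DecidableEq σ] [Fintype σ] [Fintype ι] {t : ι → Finset σ} {A : Finset σ} {a : σ →₀ ℕ}

-- `I_t : x ^ a = P_A`, tested on the monomials `x ^ b`.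
variable (t) in
def IsAssociatedExponent (A : Finset σ) (a : σ →₀ ℕ) : Prop :=
  ∀ b : σ →₀ ℕ, HallCondition t (a + b) ↔ ∃ l ∈ A, b l ≠ 0

lemma IsAssociatedExponent.exists_biUnion_eq (h : IsAssociatedExponent t A a) :
    ∃ U : Finset ι, U.biUnion t = A ∧ degreeOn A a < #U := by
  -- `out` vanishes on `A`, so Hall fails for `a + out`; as `out` is huge off `A`, the failing
  -- family has its support inside `A`.
  set out : σ →₀ ℕ := Finsupp.indicator Aᶜ fun _ _ => Fintype.card ι
  have hfail : ¬HallCondition t (a + out) := fun hH => by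
    obtain ⟨l, hlA, hl⟩ := (h out).mp hH
    simp [out, hlA] at hl
  obtain ⟨U, hU⟩ : ∃ U : Finset ι, degreeOn (U.biUnion t) (a + out) < #U := by
    simpa [HallCondition] using hfail
  have hUA : U.biUnion t ⊆ A := fun j hj => by
    by_contra hjA
    have : Fintype.card ι ≤ degreeOn (U.biUnion t) out := le_degreeOn_indicator_compl hj hjA _
    have := card_le_univ U
    rw [map_add] at hU
    omega
  rw [map_add, degreeOn_indicator_compl_of_subset hUA, add_zero] at hU
  have hAU : A ⊆ U.biUnion t := fun l hlA => by
    by_contra hlU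
    have := (h (Finsupp.single l 1)).mpr ⟨l, hlA, by simp⟩ U
    rw [map_add, degreeOn_single, if_neg hlU, add_zero] at this
    omega
  exact ⟨U, subset_antisymm hUA hAU, subset_antisymm hUA hAU ▸ hU⟩

lemma IsAssociatedExponent.biUnion_eq_and_balanced (ht : ∀ i, (t i).Nonempty)
    (h : IsAssociatedExponent t A a) :
    (supportedFactors t A).biUnion t = A ∧ Balanced t 1 (supportedFactors t A) a := by
  have hl : ∀ l ∈ A, HallCondition t (a + Finsupp.single l 1) :=
    fun l hl => (h _).mpr ⟨l, hl, by simp⟩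
  obtain ⟨U, hUA, hU⟩ := h.exists_biUnion_eq
  have hUW := subset_supportedFactors hUA.le
  have hcov : (supportedFactors t A).biUnion t = A :=
    subset_antisymm biUnion_supportedFactors_subset (hUA.ge.trans (biUnion_subset_biUnion_of_subset_left t hUW))
  obtain ⟨l₀, hl₀⟩ : A.Nonempty := hUA ▸ (card_pos.mp (by omega)).biUnion fun i _ => ht i
  refine ⟨hcov, ?_, fun V hV hne => ?_⟩
  · have := hl l₀ hl₀ (supportedFactors t A)
    rw [hcov, map_add, degreeOn_single, if_pos hl₀] at this
    have := card_le_card hUW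
    rw [hcov]
    omega
  · obtain ⟨l, hlA, hlV⟩ := not_subset.mp fun hAV =>
      hne (subset_antisymm (biUnion_subset_biUnion_of_subset_left t hV) (hcov.le.trans hAV))
    have := hl l hlA V
    rw [map_add, degreeOn_single, if_neg hlV, add_zero] at this
    omega

lemma Balanced.isAssociatedExponent {α : σ →₀ ℕ}
    (hcov : (supportedFactors t A).biUnion t = A) (h : Balanced t 1 (supportedFactors t A) α) :
    IsAssociatedExponent t A (α + Finsupp.indicator Aᶜ fun _ _ => Fintype.card ι) := by
  intro b
  constructor
  · intro hH
    by_contra! hb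
    have hW := hH (supportedFactors t A)
    have hα := h.1
    rw [hcov] at hW hα
    rw [map_add, map_add, degreeOn_indicator_compl_of_subset subset_rfl, degreeOn_apply A b,
      sum_eq_zero hb] at hW
    omega
  · rintro ⟨l, hlA, hl⟩ U
    rw [map_add, map_add]
    by_cases hUA : U.biUnion t ⊆ A
    · have hUW := subset_supportedFactors hUA
      rw [degreeOn_indicator_compl_of_subset hUA]
      by_cases hlU : l ∈ U.biUnion t
      · have := h.mul_card_le hUW
        have : b l ≤ degreeOn (U.biUnion t) b := by
          simpa using single_le_sum (fun _ _ => Nat.zero_le _) hlU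
        omega
      · have := h.2 U hUW fun hUW' => hlU (hUW'.ge (hcov.ge hlA))
        omega
    · obtain ⟨j, hjU, hjA⟩ := not_subset.mp hUA
      have := le_degreeOn_indicator_compl hjU hjA (Fintype.card ι)
      have := card_le_univ U
      omega

lemma exists_isAssociatedExponent_iff (ht : ∀ i, (t i).Nonempty) :
    (∃ a, IsAssociatedExponent t A a) ↔
      (supportedFactors t A).biUnion t = A ∧ ∃ α, Balanced t 1 (supportedFactors t A) α :=
  ⟨fun ⟨_, h⟩ => ⟨(h.biUnion_eq_and_balanced ht).1, _, (h.biUnion_eq_and_balanced ht).2⟩,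
    fun ⟨hcov, _, h⟩ => ⟨_, h.isAssociatedExponent hcov⟩⟩

lemma exists_isAssociatedExponent_replicate_iff [DecidableEq ι] {k : ℕ} (ht : ∀ i, (t i).Nonempty)
    (hk : 0 < k) :
    (∃ a, IsAssociatedExponent (fun p : ι × Fin k => t p.1) A a) ↔
      ∃ a, IsAssociatedExponent t A a := by
  rw [exists_isAssociatedExponent_iff (t := fun p : ι × Fin k => t p.1) fun p => ht p.1,
    exists_isAssociatedExponent_iff ht, supportedFactors_replicate, biUnion_product_univ hk]
  simp only [balanced_replicate_iff hk, exists_balanced_iff_linked ht hk,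
    exists_balanced_iff_linked ht one_pos]

end AssociatedExponent

section Ideals

lemma mem_associatedPrimes_quotient_iff {R : Type*} [CommRing R] [IsNoetherianRing R]
    {J p : Ideal R} : p ∈ associatedPrimes R (R ⧸ J) ↔ p.IsPrime ∧ ∃ f : R, p = J.colon {f} := by
  rw [AssociatedPrimes.mem_iff, isAssociatedPrime_iff, Ideal.Quotient.mk_surjective.exists]
  have hcolon : ∀ f : R, (⊥ : Submodule R (R ⧸ J)).colon {Ideal.Quotient.mk J f} = J.colon {f} :=
    fun f => by ext r; simp [Algebra.smul_def, ← map_mul, Ideal.Quotient.eq_zero_iff_mem]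
  simp only [hcolon]

variable {K : Type*} [Field K]

noncomputable def varIdeal (A : Finset σ) : Ideal (MvPolynomial σ K) := Ideal.span (X '' A)

lemma X_mem_varIdeal {A : Finset σ} {l : σ} (hl : l ∈ A) : (X l : MvPolynomial σ K) ∈ varIdeal A :=
  Ideal.subset_span (Set.mem_image_of_mem X hl)

noncomputable def transversalIdeal [Fintype ι] (t : ι → Finset σ) : Ideal (MvPolynomial σ K) :=
  ∏ i, varIdeal (t i)

lemma transversalIdeal_eq_span [Fintype ι] (t : ι → Finset σ) :
    (transversalIdeal t : Ideal (MvPolynomial σ K)) = Ideal.span ((monomial · 1) ''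
      {μ | ∃ j : ι → σ, (∀ i, j i ∈ t i) ∧ ∑ i, Finsupp.single (j i) 1 = μ}) := by
  simp only [transversalIdeal, varIdeal]
  rw [Ideal.prod_span]
  congr 1
  ext f
  simp only [Set.mem_finsetProd, Set.mem_image, mem_coe, mem_univ, forall_const]
  constructor
  · rintro ⟨g, hg, rfl⟩
    choose j hj hjg using fun i => @hg i
    exact ⟨_, ⟨j, hj, rfl⟩, by rw [monomial_sum_one]; exact prod_congr rfl fun i _ => hjg i⟩
  · rintro ⟨_, ⟨j, hj, rfl⟩, rfl⟩
    exact ⟨fun i => X (j i), @fun i => ⟨j i, hj i, rfl⟩, (monomial_sum_one _ _).symm⟩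

lemma varIdeal_pow_eq (A : Finset σ) (w : ℕ) :
    (varIdeal A : Ideal (MvPolynomial σ K)) ^ w = transversalIdeal fun _ : Fin w => A := by
  rw [transversalIdeal, prod_const, card_univ, Fintype.card_fin]

lemma inf_colon_monomial_le_colon (J : Ideal (MvPolynomial σ K)) (f : MvPolynomial σ K) :
    f.support.inf (fun b => J.colon {monomial b 1}) ≤ J.colon {f} := by
  intro r hr
  simp only [Submodule.mem_finsetInf, Submodule.mem_colon_singleton, smul_eq_mul] at hr ⊢
  rw [f.as_sum, mul_sum]
  refine J.sum_mem fun b hb => ?_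
  rw [← mul_one (coeff b f), ← C_mul_monomial, mul_left_comm]
  exact J.mul_mem_left _ (hr b hb)

variable [DecidableEq σ] [Fintype ι] {t : ι → Finset σ}

lemma mem_transversalIdeal_iff {f : MvPolynomial σ K} :
    f ∈ transversalIdeal t ↔ ∀ b ∈ f.support, HallCondition t b := by
  rw [transversalIdeal_eq_span, mem_ideal_span_monomial_image]
  refine forall₂_congr fun b _ => ?_
  simp only [Set.mem_ofPred_eq]
  rw [← exists_le_iff_hallCondition]
  constructor
  · rintro ⟨_, ⟨j, hj, rfl⟩, hle⟩
    exact ⟨j, hj, hle⟩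
  · rintro ⟨j, hj, hle⟩
    exact ⟨_, ⟨j, hj, rfl⟩, hle⟩

lemma monomial_mul_mem_transversalIdeal_iff (a : σ →₀ ℕ) (g : MvPolynomial σ K) :
    monomial a 1 * g ∈ transversalIdeal t ↔ ∀ b ∈ g.support, HallCondition t (a + b) := by
  have hsupp : (monomial a (1 : K) * g).support = g.support.map (addLeftEmbedding a) :=
    AddMonoidAlgebra.support_coeff_single_mul g _ (by simp) _
  rw [mem_transversalIdeal_iff, hsupp, forall_mem_map]
  rfl

lemma mem_varIdeal_pow_iff {A : Finset σ} {w : ℕ} {f : MvPolynomial σ K} :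
    f ∈ varIdeal A ^ w ↔ ∀ b ∈ f.support, w ≤ degreeOn A b := by
  rw [varIdeal_pow_eq, mem_transversalIdeal_iff]
  exact forall₂_congr fun b _ => hallCondition_const_iff

-- Pulls `(T ^ w)` back to `varIdeal A ^ w`, making `varIdeal A` prime and its powers primary.
noncomputable def tag (A : Finset σ) : MvPolynomial σ K →ₐ[K] Polynomial (MvPolynomial σ K) :=
  aeval fun l => Polynomial.C (X l) * Polynomial.X ^ if l ∈ A then 1 else 0

lemma tag_monomial (A : Finset σ) (b : σ →₀ ℕ) (c : K) :
    tag A (monomial b c) = Polynomial.C (monomial b c) * Polynomial.X ^ degreeOn A b := by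
  have hdeg : ∑ l ∈ b.support, (if l ∈ A then 1 else 0) * b l = degreeOn A b := by
    simp only [ite_mul, one_mul, zero_mul, sum_ite_mem, degreeOn_apply]
    exact sum_subset inter_subset_right fun j _ hj => by simp_all
  simp only [tag, aeval_monomial, Finsupp.prod, mul_pow, prod_mul_distrib, ← pow_mul,
    prod_pow_eq_pow_sum, hdeg]
  rw [monomial_eq, Finsupp.prod, Polynomial.C_mul, map_prod]
  simp [Polynomial.C_pow, mul_assoc]

lemma coeff_coeff_tag (A : Finset σ) (f : MvPolynomial σ K) (d : ℕ) (b : σ →₀ ℕ) :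
    coeff b ((tag A f).coeff d) = if degreeOn A b = d then coeff b f else 0 := by
  conv_lhs => rw [f.as_sum]
  simp only [map_sum, tag_monomial, Polynomial.finsetSum_coeff, Polynomial.coeff_C_mul_X_pow,
    coeff_sum, apply_ite (coeff b), coeff_monomial, coeff_zero]
  rw [sum_eq_single b (fun b' _ hb' => by simp [hb']) (fun hb => by simp_all)]
  simp [eq_comm]

lemma varIdeal_pow_eq_comap (A : Finset σ) (w : ℕ) :
    (varIdeal A : Ideal (MvPolynomial σ K)) ^ w =
      (Ideal.span {Polynomial.X ^ w}).comap (tag A) := by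
  ext f
  rw [mem_varIdeal_pow_iff, Ideal.mem_comap, Ideal.mem_span_singleton, Polynomial.X_pow_dvd_iff]
  simp only [MvPolynomial.ext_iff, coeff_coeff_tag, coeff_zero]
  constructor
  · intro h d hd b
    split_ifs with hb
    · by_contra hc
      exact absurd (h b (mem_support_iff.mpr hc)) (by omega)
    · rfl
  · intro h b hb
    by_contra! hlt
    simpa [mem_support_iff.mp hb] using h _ hlt b

instance isPrime_varIdeal (A : Finset σ) : (varIdeal A : Ideal (MvPolynomial σ K)).IsPrime := by
  rw [← pow_one (varIdeal A), varIdeal_pow_eq_comap, pow_one]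
  have : (Ideal.span {(Polynomial.X : Polynomial (MvPolynomial σ K))}).IsPrime :=
    (Ideal.span_singleton_prime Polynomial.X_ne_zero).mpr Polynomial.prime_X
  exact Ideal.comap_isPrime _ _

lemma mem_varIdeal_pow_of_mul_mem {A : Finset σ} {w : ℕ} {r f : MvPolynomial σ K}
    (h : r * f ∈ varIdeal A ^ w) (hr : r ∉ varIdeal A) : f ∈ varIdeal A ^ w := by
  rw [← pow_one (varIdeal A), varIdeal_pow_eq_comap, Ideal.mem_comap,
    Ideal.mem_span_singleton, pow_one] at hr
  rw [varIdeal_pow_eq_comap, Ideal.mem_comap, Ideal.mem_span_singleton] at h ⊢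
  rw [map_mul] at h
  exact Polynomial.prime_X.pow_dvd_of_dvd_mul_left w hr h

lemma colon_varIdeal_pow_eq_of_isPrime {A : Finset σ} {w : ℕ} {f : MvPolynomial σ K}
    (h : ((varIdeal A ^ w).colon {f}).IsPrime) : (varIdeal A ^ w).colon {f} = varIdeal A := by
  refine le_antisymm (fun r hr => ?_) ?_
  · by_contra hrA
    refine h.ne_top ((Submodule.colon_eq_top_iff_subset _).mpr ?_)
    simpa using mem_varIdeal_pow_of_mul_mem (Submodule.mem_colon_singleton.mp hr) hrA
  · refine Ideal.span_le.mpr fun _ ⟨l, hl, hX⟩ => h.mem_of_pow_mem w ?_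
    rw [Submodule.mem_colon_singleton, ← hX]
    exact Ideal.mul_mem_right _ _ (Ideal.pow_mem_pow (X_mem_varIdeal hl) w)

lemma varIdeal_le_colon_monomial {A : Finset σ} {f : MvPolynomial σ K} {b : σ →₀ ℕ}
    (hb : b ∈ f.support) (h : varIdeal A ≤ (transversalIdeal t).colon {f}) :
    varIdeal A ≤ (transversalIdeal t).colon {monomial b (1 : K)} := by
  refine Ideal.span_le.mpr fun _ ⟨l, hl, hX⟩ => ?_
  have hXf := Submodule.mem_colon_singleton.mp (h (X_mem_varIdeal hl))
  rw [SetLike.mem_coe, Submodule.mem_colon_singleton, ← hX, smul_eq_mul, X,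
    monomial_mul_mem_transversalIdeal_iff]
  rw [smul_eq_mul, X, monomial_mul_mem_transversalIdeal_iff] at hXf
  simpa [support_monomial] using hXf b hb

lemma exists_colon_monomial_eq {A : Finset σ} {f : MvPolynomial σ K}
    (h : (transversalIdeal t).colon {f} = varIdeal A) :
    ∃ b, (transversalIdeal t).colon {monomial b (1 : K)} = varIdeal A := by
  have hinf : f.support.inf (fun b => (transversalIdeal t).colon {monomial b 1}) =
      (varIdeal A : Ideal (MvPolynomial σ K)) :=
    le_antisymm (h ▸ inf_colon_monomial_le_colon _ f)
      (Finset.le_inf fun b hb => varIdeal_le_colon_monomial hb h.ge)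
  obtain ⟨b, -, hb⟩ := Ideal.eq_inf_of_isPrime_inf (hinf ▸ isPrime_varIdeal A)
  exact ⟨b, hb.trans hinf⟩

lemma colon_monomial_eq_varIdeal_iff {A : Finset σ} {a : σ →₀ ℕ} :
    (transversalIdeal t).colon {monomial a (1 : K)} = varIdeal A ↔ IsAssociatedExponent t A a := by
  have hcolon : ∀ r : MvPolynomial σ K, r ∈ (transversalIdeal t).colon {monomial a 1} ↔
      ∀ b ∈ r.support, HallCondition t (a + b) := fun r => by
    rw [Submodule.mem_colon_singleton, smul_eq_mul, mul_comm,
      monomial_mul_mem_transversalIdeal_iff]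
  have hvar : ∀ r : MvPolynomial σ K, r ∈ varIdeal A ↔ ∀ b ∈ r.support, ∃ l ∈ A, b l ≠ 0 :=
    fun r => mem_ideal_span_X_image
  constructor
  · intro h b
    simpa [hcolon, hvar, support_monomial] using SetLike.ext_iff.mp h (monomial b 1)
  · intro h
    ext r
    rw [hcolon, hvar]
    exact forall₂_congr fun b _ => h b

variable [Fintype σ]

lemma transversalIdeal_eq_inf :
    (transversalIdeal t : Ideal (MvPolynomial σ K)) =
      univ.inf fun A => varIdeal A ^ #(supportedFactors t A) := by
  ext f
  simp only [mem_transversalIdeal_iff, hallCondition_iff_card_supportedFactors_le,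
    Submodule.mem_finsetInf, mem_univ, true_implies, mem_varIdeal_pow_iff]
  exact ⟨fun h A b hb => h b hb A, fun h b hb A => h A b hb⟩

lemma exists_colon_eq_varIdeal {f : MvPolynomial σ K}
    (h : ((transversalIdeal t : Ideal (MvPolynomial σ K)).colon {f}).IsPrime) :
    ∃ A, (transversalIdeal t : Ideal (MvPolynomial σ K)).colon {f} = varIdeal A := by
  rw [transversalIdeal_eq_inf, Submodule.colon_finsetInf] at h ⊢
  obtain ⟨A, -, hA⟩ := Ideal.eq_inf_of_isPrime_inf h
  rw [← hA] at h ⊢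
  exact ⟨A, colon_varIdeal_pow_eq_of_isPrime h⟩

theorem mem_associatedPrimes_iff {p : Ideal (MvPolynomial σ K)} :
    p ∈ associatedPrimes (MvPolynomial σ K) (MvPolynomial σ K ⧸ transversalIdeal t) ↔
      ∃ A, p = varIdeal A ∧ ∃ a, IsAssociatedExponent t A a := by
  rw [mem_associatedPrimes_quotient_iff]
  constructor
  · rintro ⟨hp, f, rfl⟩
    obtain ⟨A, hA⟩ := exists_colon_eq_varIdeal hp
    obtain ⟨a, ha⟩ := exists_colon_monomial_eq hA
    exact ⟨A, hA, a, colon_monomial_eq_varIdeal_iff.mp ha⟩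
  · rintro ⟨A, rfl, a, ha⟩
    exact ⟨isPrime_varIdeal A, _, (colon_monomial_eq_varIdeal_iff.mpr ha).symm⟩

omit [DecidableEq σ] [Fintype σ] in
lemma transversalIdeal_replicate (t : ι → Finset σ) (k : ℕ) :
    (transversalIdeal (fun p : ι × Fin k => t p.1) : Ideal (MvPolynomial σ K)) =
      transversalIdeal t ^ k := by
  simp only [transversalIdeal, ← univ_product_univ, prod_product, prod_const, card_univ,
    Fintype.card_fin, prod_pow]

theorem associatedPrimes_transversalIdeal_pow [DecidableEq ι] (ht : ∀ i, (t i).Nonempty)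
    {k : ℕ} (hk : 0 < k) :
    associatedPrimes (MvPolynomial σ K) (MvPolynomial σ K ⧸ transversalIdeal t ^ k) =
      associatedPrimes (MvPolynomial σ K) (MvPolynomial σ K ⧸ transversalIdeal t) := by
  ext p
  rw [← transversalIdeal_replicate, mem_associatedPrimes_iff, mem_associatedPrimes_iff]
  simp only [exists_isAssociatedExponent_replicate_iff ht hk]

end Ideals

end TransversalIdeal

/-- For a transversal polymatroidal ideal `I = P_1 ⋯ P_w`, i.e. a product of ideals each
generated by a nonempty subset of the variables, one has `Ass(R/I) = Ass(R/I^k)` for all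
`k > 0`. -/
theorem transversal_ass_pow_eq {n w : ℕ} {K : Type*} [Field K]
    (P : Fin w → Ideal (MvPolynomial (Fin n) K))
    (hP : ∀ i, ∃ s : Set (Fin n), s.Nonempty ∧
      P i = Ideal.span ((fun j => (X j : MvPolynomial (Fin n) K)) '' s))
    (I : Ideal (MvPolynomial (Fin n) K)) (hI : I = ∏ i, P i)
    (k : ℕ) (hk : 0 < k) :
    associatedPrimes (MvPolynomial (Fin n) K) (MvPolynomial (Fin n) K ⧸ I) =
      associatedPrimes (MvPolynomial (Fin n) K) (MvPolynomial (Fin n) K ⧸ I ^ k) := by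
  choose s hs hPs using hP
  let t : Fin w → Finset (Fin n) := fun i => (s i).toFinite.toFinset
  have hI' : I = TransversalIdeal.transversalIdeal t := by
    simp only [hI, hPs, TransversalIdeal.transversalIdeal, TransversalIdeal.varIdeal, t,
      Set.Finite.coe_toFinset]
  have ht : ∀ i, (t i).Nonempty := fun i => by simpa [t] using hs i
  rw [hI', TransversalIdeal.associatedPrimes_transversalIdeal_pow ht hk]
end

section
/- Let K be a field and R = K[X_1,…,X_n]. For nonnegative integers a_1,…,a_n set b_i = a_1 + ⋯ + a_i. Then ∏_{i=1}^n (X_1,…,X_i)^{a_i} = ⋂_{i=1}^n (X_1,…,X_i)^{b_i}, where (X_1,…,X_i) denotes the ideal of R generated by the variables X_1,…,X_i. -/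
open MvPolynomial

namespace ProdPowAux

variable {n : ℕ} {K : Type*} [Field K]

noncomputable def P (K : Type*) [Field K] {n : ℕ} (i : Fin n) : Ideal (MvPolynomial (Fin n) K) :=
  Ideal.span ((fun j => (X j : MvPolynomial (Fin n) K)) '' {j | j ≤ i})

lemma X_mem_P {j i : Fin n} (h : j ≤ i) : (X j : MvPolynomial (Fin n) K) ∈ P K i :=
  Ideal.subset_span ⟨j, h, rfl⟩

lemma P_mono {k i : Fin n} (h : k ≤ i) : P K k ≤ P K i :=
  Ideal.span_mono (Set.image_mono fun j (hj : j ≤ k) => le_trans hj h)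

/-- monomials with enough low-degree are in `P i ^ m` -/
lemma monomial_mem_P_pow {i : Fin n} (m : ℕ) (d : Fin n →₀ ℕ)
    (h : m ≤ ∑ j ∈ Finset.Iic i, d j) : monomial d (1 : K) ∈ P K i ^ m := by
  induction m generalizing d with
  | zero => simp [Ideal.one_eq_top]
  | succ m ih =>
    have hpos : 0 < ∑ j ∈ Finset.Iic i, d j := lt_of_lt_of_le (Nat.succ_pos m) h
    obtain ⟨j, hji, hj⟩ : ∃ j ∈ Finset.Iic i, d j ≠ 0 := by
      by_contra hc
      push_neg at hc
      simp [Finset.sum_congr rfl hc] at hpos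
    set d' : Fin n →₀ ℕ := d - Finsupp.single j 1 with hd'
    have hle : Finsupp.single j 1 ≤ d := by
      rw [Finsupp.single_le_iff]; omega
    have hdd : Finsupp.single j 1 + d' = d := add_tsub_cancel_of_le hle
    have hsum : ∑ k ∈ Finset.Iic i, d' k = (∑ k ∈ Finset.Iic i, d k) - 1 := by
      rw [← hdd]
      simp only [Finsupp.add_apply, Finset.sum_add_distrib]
      have : ∑ k ∈ Finset.Iic i, Finsupp.single j 1 k = 1 := by
        rw [Finset.sum_eq_single j]
        · simp
        · intro b _ hb; simp [Finsupp.single_apply, (Ne.symm hb)]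
        · intro hb; exact absurd hji hb
      omega
    have hmem' : monomial d' (1 : K) ∈ P K i ^ m := ih d' (by omega)
    have : monomial d (1 : K) = X j * monomial d' (1 : K) := by
      rw [X, monomial_mul, one_mul, hdd]
    rw [this, pow_succ']
    exact Ideal.mul_mem_mul (X_mem_P (Finset.mem_Iic.mp hji)) hmem'

lemma mem_P_pow {i : Fin n} {m : ℕ} {f : MvPolynomial (Fin n) K} :
    f ∈ P K i ^ m ↔ ∀ d ∈ f.support, m ≤ ∑ j ∈ Finset.Iic i, d j := by
  constructor
  · intro hf
    induction m generalizing f with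
    | zero => intro d _; exact Nat.zero_le _
    | succ m ih =>
      rw [pow_succ'] at hf
      refine Submodule.mul_induction_on hf ?_ ?_
      · intro g hg h hh d hd
        obtain ⟨dg, hdg, dh, hdh, rfl⟩ := Finset.mem_add.mp (support_mul g h hd)
        have h1 : ∃ k ∈ Finset.Iic i, dg k ≠ 0 := by
          obtain ⟨k, hk1, hk2⟩ := (mem_ideal_span_X_image.mp hg) dg hdg
          exact ⟨k, Finset.mem_Iic.mpr hk1, hk2⟩
        obtain ⟨k, hk1, hk2⟩ := h1
        have h2 : m ≤ ∑ j ∈ Finset.Iic i, dh j := ih hh dh hdh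
        have h3 : 1 ≤ ∑ j ∈ Finset.Iic i, dg j :=
          le_trans (by omega) (Finset.single_le_sum (fun _ _ => Nat.zero_le _) hk1)
        simp only [Finsupp.add_apply, Finset.sum_add_distrib]
        omega
      · intro x y hx hy d hd
        rcases Finset.mem_union.mp (Finsupp.support_add hd) with h | h
        exacts [hx d h, hy d h]
  · intro hf
    have : f = ∑ d ∈ f.support, monomial d (coeff d f) := (support_sum_monomial_coeff f).symm
    rw [this]
    refine Ideal.sum_mem _ fun d hd => ?_
    have : monomial d (coeff d f) = C (coeff d f) * monomial d (1 : K) := by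
      rw [C_mul_monomial, mul_one]
    rw [this]
    exact Ideal.mul_mem_left _ _ (monomial_mem_P_pow m d (hf d hd))

end ProdPowAux

namespace ProdPowAux

variable {n : ℕ} {K : Type*} [Field K]

lemma ideal_prod_le_prod {ι R : Type*} [CommSemiring R] (s : Finset ι) (f g : ι → Ideal R)
    (h : ∀ k ∈ s, f k ≤ g k) : ∏ k ∈ s, f k ≤ ∏ k ∈ s, g k := by
  induction s using Finset.cons_induction with
  | empty => simp
  | cons i s hi ih =>
    rw [Finset.prod_cons, Finset.prod_cons]
    exact Ideal.mul_mono (h i (Finset.mem_cons_self i s))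
      (ih fun k hk => h k (Finset.mem_cons_of_mem hk))

lemma monomial_mem_prod (N : ℕ) : ∀ (a : Fin n → ℕ), (∑ i, a i = N) →
    ∀ d : Fin n →₀ ℕ, (∀ i, ∑ j ∈ Finset.Iic i, a j ≤ ∑ j ∈ Finset.Iic i, d j) →
    monomial d (1 : K) ∈ ∏ i, P K i ^ a i := by
  induction N with
  | zero =>
    intro a hN d _
    have : ∀ i ∈ Finset.univ, P K i ^ a i = 1 := fun i hi => by
      rw [Finset.sum_eq_zero_iff.mp hN i hi, pow_zero]
    rw [Finset.prod_congr rfl this, Finset.prod_const_one, Ideal.one_eq_top]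
    exact Submodule.mem_top
  | succ N ih =>
    intro a hN d hd
    classical
    have hS : (Finset.univ.filter (fun i => a i ≠ 0)).Nonempty := by
      by_contra hc
      rw [Finset.not_nonempty_iff_eq_empty, Finset.filter_eq_empty_iff] at hc
      push_neg at hc
      rw [Finset.sum_congr rfl fun i hi => hc hi, Finset.sum_const_zero] at hN
      omega
    set i₀ := (Finset.univ.filter (fun i => a i ≠ 0)).max' hS with hi₀def
    have hai₀ : a i₀ ≠ 0 :=
      (Finset.mem_filter.mp (Finset.max'_mem _ hS)).2
    have htop : ∀ i, i₀ < i → a i = 0 := by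
      intro i hi
      by_contra hai
      exact absurd (Finset.le_max' _ i (Finset.mem_filter.mpr ⟨Finset.mem_univ i, hai⟩))
        (not_le.mpr hi)
    -- there is a j ≤ i₀ with d j ≠ 0
    have hdpos : 0 < ∑ j ∈ Finset.Iic i₀, d j := by
      have h1 : a i₀ ≤ ∑ j ∈ Finset.Iic i₀, a j :=
        Finset.single_le_sum (fun _ _ => Nat.zero_le _) (Finset.mem_Iic.mpr le_rfl)
      have := hd i₀
      omega
    have hT : ((Finset.Iic i₀).filter (fun j => d j ≠ 0)).Nonempty := by
      by_contra hc
      rw [Finset.not_nonempty_iff_eq_empty, Finset.filter_eq_empty_iff] at hc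
      push_neg at hc
      rw [Finset.sum_congr rfl fun j hj => hc hj, Finset.sum_const_zero] at hdpos
      omega
    set j₀ := ((Finset.Iic i₀).filter (fun j => d j ≠ 0)).max' hT with hj₀def
    have hj₀i₀ : j₀ ≤ i₀ :=
      Finset.mem_Iic.mp (Finset.mem_filter.mp (Finset.max'_mem _ hT)).1
    have hdj₀ : d j₀ ≠ 0 := (Finset.mem_filter.mp (Finset.max'_mem _ hT)).2
    have hzero : ∀ k, j₀ < k → k ≤ i₀ → d k = 0 := by
      intro k hk1 hk2
      by_contra hdk
      exact absurd (Finset.le_max' _ k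
        (Finset.mem_filter.mpr ⟨Finset.mem_Iic.mpr hk2, hdk⟩)) (not_le.mpr hk1)
    set a' : Fin n → ℕ := Function.update a i₀ (a i₀ - 1) with ha'def
    set d' : Fin n →₀ ℕ := d - Finsupp.single j₀ 1 with hd'def
    have hle : Finsupp.single j₀ 1 ≤ d := by rw [Finsupp.single_le_iff]; omega
    have hdd : Finsupp.single j₀ 1 + d' = d := add_tsub_cancel_of_le hle
    -- sum formulas
    have hsingle : ∀ i : Fin n, ∑ k ∈ Finset.Iic i, Finsupp.single j₀ 1 k
        = if j₀ ∈ Finset.Iic i then 1 else 0 := by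
      intro i
      by_cases h : j₀ ∈ Finset.Iic i
      · rw [if_pos h, Finset.sum_eq_single j₀]
        · simp
        · intro b _ hb; simp [Finsupp.single_apply, Ne.symm hb]
        · intro hb; exact absurd h hb
      · rw [if_neg h]
        refine Finset.sum_eq_zero fun b hb => ?_
        have : j₀ ≠ b := fun hjb => h (hjb ▸ hb)
        simp [Finsupp.single_apply, this]
    have hsd : ∀ i : Fin n, ∑ k ∈ Finset.Iic i, d' k
        = (∑ k ∈ Finset.Iic i, d k) - (if j₀ ∈ Finset.Iic i then 1 else 0)
        ∧ (if j₀ ∈ Finset.Iic i then 1 else 0) ≤ ∑ k ∈ Finset.Iic i, d k := by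
      intro i
      have h1 : ∑ k ∈ Finset.Iic i, d k
          = (if j₀ ∈ Finset.Iic i then 1 else 0) + ∑ k ∈ Finset.Iic i, d' k := by
        rw [← hdd]; simp only [Finsupp.add_apply, Finset.sum_add_distrib, hsingle i]
      omega
    have hsa : ∀ i : Fin n, i₀ ∈ Finset.Iic i →
        ∑ k ∈ Finset.Iic i, a' k + 1 = ∑ k ∈ Finset.Iic i, a k := by
      intro i hi
      rw [Finset.sum_eq_sum_sdiff_singleton_add hi a',
        Finset.sum_eq_sum_sdiff_singleton_add hi a]
      have h2 : a' i₀ = a i₀ - 1 := Function.update_self _ _ _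
      have h3 : ∑ k ∈ Finset.Iic i \ {i₀}, a' k = ∑ k ∈ Finset.Iic i \ {i₀}, a k :=
        Finset.sum_congr rfl fun k hk =>
          Function.update_of_ne (by simpa using (Finset.mem_sdiff.mp hk).2) _ _
      omega
    have hsa' : ∀ i : Fin n, i₀ ∉ Finset.Iic i →
        ∑ k ∈ Finset.Iic i, a' k = ∑ k ∈ Finset.Iic i, a k := by
      intro i hi
      refine Finset.sum_congr rfl fun k hk => Function.update_of_ne ?_ _ _
      rintro rfl; exact hi hk
    -- the key extra inequality in the middle case
    have hkey : ∀ i : Fin n, j₀ ≤ i → i < i₀ →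
        ∑ k ∈ Finset.Iic i, a k + 1 ≤ ∑ k ∈ Finset.Iic i, d k := by
      intro i hji hii
      have hsplit : Finset.Iic i ∪ Finset.Ioc i i₀ = Finset.Iic i₀ := by
        ext k; simp only [Finset.mem_union, Finset.mem_Iic, Finset.mem_Ioc]; omega
      have hdisj : Disjoint (Finset.Iic i) (Finset.Ioc i i₀) := by
        rw [Finset.disjoint_left]
        intro k hk1 hk2
        rw [Finset.mem_Iic] at hk1; rw [Finset.mem_Ioc] at hk2
        omega
      have hsum_d : ∑ k ∈ Finset.Iic i₀, d k
          = ∑ k ∈ Finset.Iic i, d k + ∑ k ∈ Finset.Ioc i i₀, d k := by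
        rw [← hsplit, Finset.sum_union hdisj]
      have hd0 : ∑ k ∈ Finset.Ioc i i₀, d k = 0 := by
        refine Finset.sum_eq_zero fun k hk => ?_
        rw [Finset.mem_Ioc] at hk
        exact hzero k (lt_of_le_of_lt hji hk.1) hk.2
      have hsum_a : ∑ k ∈ Finset.Iic i₀, a k
          = ∑ k ∈ Finset.Iic i, a k + ∑ k ∈ Finset.Ioc i i₀, a k := by
        rw [← hsplit, Finset.sum_union hdisj]
      have hai : a i₀ ≤ ∑ k ∈ Finset.Ioc i i₀, a k :=
        Finset.single_le_sum (fun _ _ => Nat.zero_le _) (Finset.mem_Ioc.mpr ⟨hii, le_rfl⟩)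
      have := hd i₀
      omega
    -- hypothesis of induction for a', d'
    have hhyp : ∀ i, ∑ j ∈ Finset.Iic i, a' j ≤ ∑ j ∈ Finset.Iic i, d' j := by
      intro i
      obtain ⟨hsd1, hsd2⟩ := hsd i
      by_cases hj : j₀ ∈ Finset.Iic i
      · by_cases hi : i₀ ∈ Finset.Iic i
        · have := hsa i hi; have := hd i; rw [if_pos hj] at hsd1 hsd2; omega
        · have := hsa' i hi
          have hii : i < i₀ := by
            rw [Finset.mem_Iic] at hi; exact lt_of_not_ge hi
          have := hkey i (Finset.mem_Iic.mp hj) hii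
          rw [if_pos hj] at hsd1 hsd2; omega
      · have hi : i₀ ∉ Finset.Iic i := fun h => hj (Finset.mem_Iic.mpr
          (le_trans hj₀i₀ (Finset.mem_Iic.mp h)))
        have := hsa' i hi; have := hd i; rw [if_neg hj] at hsd1 hsd2; omega
    have hsumN : ∑ i, a' i = N := by
      rw [Finset.sum_eq_sum_sdiff_singleton_add (Finset.mem_univ i₀) a'] 
      rw [Finset.sum_eq_sum_sdiff_singleton_add (Finset.mem_univ i₀) a] at hN
      have h2 : a' i₀ = a i₀ - 1 := Function.update_self _ _ _
      have h3 : ∑ k ∈ Finset.univ \ {i₀}, a' k = ∑ k ∈ Finset.univ \ {i₀}, a k :=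
        Finset.sum_congr rfl fun k hk =>
          Function.update_of_ne (by simpa using (Finset.mem_sdiff.mp hk).2) _ _
      omega
    have hmem' := ih a' hsumN d' hhyp
    have hprod : ∏ i, P K i ^ a i = P K i₀ * ∏ i, P K i ^ a' i := by
      rw [Finset.prod_eq_mul_prod_sdiff_singleton_of_mem (Finset.mem_univ i₀) (fun i => P K i ^ a i),
        Finset.prod_eq_mul_prod_sdiff_singleton_of_mem (Finset.mem_univ i₀) (fun i => P K i ^ a' i)]
      have h2 : a' i₀ = a i₀ - 1 := Function.update_self _ _ _
      have h3 : ∏ k ∈ Finset.univ \ {i₀}, P K k ^ a' k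
          = ∏ k ∈ Finset.univ \ {i₀}, P K k ^ a k := by
        exact Finset.prod_congr rfl fun k hk => congrArg (fun m => P K k ^ m)
          (Function.update_of_ne (by simpa using (Finset.mem_sdiff.mp hk).2) _ _)
      rw [h3, ← mul_assoc]
      congr 1
      rw [h2, ← pow_succ']
      congr 1
      omega
    have heq : monomial d (1 : K) = X j₀ * monomial d' (1 : K) := by
      rw [X, monomial_mul, one_mul, hdd]
    rw [hprod, heq]
    exact Ideal.mul_mem_mul (X_mem_P hj₀i₀) hmem'

theorem main (a : Fin n → ℕ) :
    (∏ i : Fin n, P K i ^ a i)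
      = ⨅ i : Fin n, P K i ^ (∑ j ∈ Finset.Iic i, a j) := by
  classical
  apply le_antisymm
  · refine le_iInf fun i => ?_
    have huniv : Finset.univ.filter (fun k : Fin n => k ≤ i) = Finset.Iic i := by
      ext k; simp
    calc ∏ k, P K k ^ a k
        ≤ ∏ k, (if k ≤ i then P K i ^ a k else 1) := by
          refine ideal_prod_le_prod _ _ _ fun k _ => ?_
          by_cases h : k ≤ i
          · rw [if_pos h]; exact Ideal.pow_right_mono (P_mono h) _
          · rw [if_neg h, Ideal.one_eq_top]; exact le_top
      _ = ∏ k ∈ Finset.univ.filter (fun k => k ≤ i), P K i ^ a k := by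
          rw [Finset.prod_ite, Finset.prod_const_one, mul_one]
      _ = P K i ^ (∑ k ∈ Finset.Iic i, a k) := by
          rw [huniv, Finset.prod_pow_eq_pow_sum]
  · intro f hf
    rw [Ideal.mem_iInf] at hf
    have hsupp : ∀ d ∈ f.support, ∀ i, ∑ j ∈ Finset.Iic i, a j ≤ ∑ j ∈ Finset.Iic i, d j :=
      fun d hd i => mem_P_pow.mp (hf i) d hd
    have : f = ∑ d ∈ f.support, monomial d (coeff d f) := (support_sum_monomial_coeff f).symm
    rw [this]
    refine Ideal.sum_mem _ fun d hd => ?_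
    have h1 : monomial d (coeff d f) = C (coeff d f) * monomial d (1 : K) := by
      rw [C_mul_monomial, mul_one]
    rw [h1]
    exact Ideal.mul_mem_left _ _
      (monomial_mem_prod (∑ i, a i) a rfl d (fun i => hsupp d hd i))

end ProdPowAux

/-- For nonnegative integers `a_1,…,a_n` and `b_i = a_1 + ⋯ + a_i` one has
`∏_{i=1}^n (X_1,…,X_i)^{a_i} = ⋂_{i=1}^n (X_1,…,X_i)^{b_i}` in `K[X_1,…,X_n]`. -/
theorem prod_pow_varIdeals_eq_iInf_pow {n : ℕ} {K : Type*} [Field K] (a : Fin n → ℕ) :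
    (∏ i : Fin n,
        (Ideal.span ((fun j => (X j : MvPolynomial (Fin n) K)) '' {j | j ≤ i})) ^ a i) =
      ⨅ i : Fin n,
        (Ideal.span ((fun j => (X j : MvPolynomial (Fin n) K)) '' {j | j ≤ i})) ^
          (∑ j ∈ Finset.Iic i, a j) :=
  ProdPowAux.main a
end

section
/- Let K be a field and R = K[X_1,…,X_n]. For a monomial u of R let I(u) denote the smallest strongly stable monomial ideal of R containing u. Then for every pair of monomials u_1, u_2 one has I(u_1)·I(u_2) = I(u_1·u_2). -/
open MvPolynomial

/-- A monomial ideal `I` of `K[X_1,…,X_n]` is *strongly stable* if for every monomial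
`m ∈ I`, every `j` with `X_j ∣ m` and every `i < j` one has `X_i · (m / X_j) ∈ I`. -/
def IsStronglyStable {n : ℕ} {K : Type*} [Field K]
    (I : Ideal (MvPolynomial (Fin n) K)) : Prop :=
  (∃ G : Set (Fin n →₀ ℕ), I = Ideal.span ((fun m => (monomial m (1 : K))) '' G)) ∧
  ∀ m : Fin n →₀ ℕ, monomial m (1 : K) ∈ I →
    ∀ j : Fin n, 0 < m j → ∀ i : Fin n, i < j →
      monomial (m - Finsupp.single j 1 + Finsupp.single i 1) (1 : K) ∈ I

/-- `I(u)`, the smallest strongly stable monomial ideal containing the monomial `u`: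
the intersection of all strongly stable monomial ideals containing `u`. -/
noncomputable def smallestStronglyStable {n : ℕ} (K : Type*) [Field K] (u : Fin n →₀ ℕ) :
    Ideal (MvPolynomial (Fin n) K) :=
  sInf {I | IsStronglyStable I ∧ monomial u (1 : K) ∈ I}

/-!
`I(u)` is the principal Borel ideal `∏ᵢ (X₁, …, Xᵢ)^{uᵢ}`, which makes the theorem a matter of adding
exponents. The product is strongly stable because products of strongly stable ideals are (a move
acts on one of the two factors of a generator), and it contains `X^u`. Conversely, a generator of
the product arises from `X^u` by moving each of the `uᵢ` copies of `Xᵢ` to some `Xₖ` with `k ≤ i`,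
so it lies in every strongly stable ideal containing `X^u`.
-/

open scoped Pointwise
open Finsupp (single)

namespace Finsupp

@[elab_as_elim]
theorem induction_add_single_one {ι : Type*} {p : (ι →₀ ℕ) → Prop} (u : ι →₀ ℕ)
    (zero : p 0) (add_single : ∀ u i, p u → p (u + single i 1)) : p u := by
  refine Finsupp.induction₂ u zero fun i b u _ _ hu => ?_
  have (c : ℕ) : p (u + single i c) := by
    induction c with
    | zero => simpa using hu
    | succ c ih => simpa [single_add, add_assoc] using add_single _ i ih
  exact this b

theorem exists_eq_add_single_of_pos {ι : Type*} {g : ι →₀ ℕ} {j : ι} (hj : 0 < g j) :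
    ∃ g', g = g' + single j 1 :=
  ⟨g - single j 1, (tsub_add_cancel_of_le (single_le_iff.2 hj)).symm⟩

end Finsupp

theorem monomial_one_mem_span_monomial_image {σ R : Type*} [CommSemiring R] [Nontrivial R]
    {G : Set (σ →₀ ℕ)} {m : σ →₀ ℕ} :
    monomial m (1 : R) ∈ Ideal.span ((fun m => monomial m (1 : R)) '' G) ↔ ∃ g ∈ G, g ≤ m := by
  classical
  simp [mem_ideal_span_monomial_image, support_monomial]

theorem monomial_one_mem_span_X_image {σ R : Type*} [CommSemiring R] [Nontrivial R]
    {s : Set σ} {m : σ →₀ ℕ} :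
    monomial m (1 : R) ∈ Ideal.span (X '' s) ↔ ∃ i ∈ s, m i ≠ 0 := by
  classical
  simp [mem_ideal_span_X_image, support_monomial]

section
variable {n : ℕ} {K : Type*} [Field K]

/-- Moves are written additively, `m + e_j ↦ m + e_i`, to avoid truncated subtraction. -/
def IsStronglyStableSet (G : Set (Fin n →₀ ℕ)) : Prop :=
  ∀ ⦃m : Fin n →₀ ℕ⦄ ⦃j : Fin n⦄, m + single j 1 ∈ G → ∀ i < j, m + single i 1 ∈ G

theorem IsStronglyStableSet.add_single_mem_of_le {G : Set (Fin n →₀ ℕ)}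
    (hG : IsStronglyStableSet G) {m : Fin n →₀ ℕ} {i j : Fin n}
    (hm : m + single j 1 ∈ G) (hij : i ≤ j) : m + single i 1 ∈ G :=
  hij.eq_or_lt.elim (fun h => h ▸ hm) (hG hm i)

theorem IsStronglyStableSet.add {G H : Set (Fin n →₀ ℕ)} (hG : IsStronglyStableSet G)
    (hH : IsStronglyStableSet H) : IsStronglyStableSet (G + H) := by
  intro m j hm i hij
  obtain ⟨g, hg, h, hh, hgh⟩ := Set.mem_add.1 hm
  rcases Nat.eq_zero_or_pos (g j) with hgj | hgj
  · obtain ⟨h', rfl⟩ := Finsupp.exists_eq_add_single_of_pos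
      (show 0 < h j by
        have := congrArg (· j) hgh
        simp only [Finsupp.add_apply, Finsupp.single_eq_same] at this
        omega)
    rw [add_right_cancel (b := single j 1) (by rw [add_assoc, hgh] : m + _ = g + h' + _),
      add_assoc]
    exact Set.add_mem_add hg (hH hh i hij)
  · obtain ⟨g', rfl⟩ := Finsupp.exists_eq_add_single_of_pos hgj
    rw [add_right_cancel (b := single j 1)
      (by rw [add_right_comm, hgh] : m + _ = g' + h + _), add_right_comm]
    exact Set.add_mem_add (hG hg i hij) hh

variable {I J : Ideal (MvPolynomial (Fin n) K)}

theorem IsStronglyStable.isStronglyStableSet (hI : IsStronglyStable I) :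
    IsStronglyStableSet {m | monomial m (1 : K) ∈ I} := by
  intro m j hm i hij
  simpa using hI.2 _ hm j (by simp) i hij

theorem IsStronglyStable.of_isStronglyStableSet
    (hmon : ∃ G : Set (Fin n →₀ ℕ), I = Ideal.span ((fun m => monomial m (1 : K)) '' G))
    (hI : IsStronglyStableSet {m | monomial m (1 : K) ∈ I}) : IsStronglyStable I := by
  refine And.intro hmon fun m hm j hj i hij => ?_
  obtain ⟨m', rfl⟩ := Finsupp.exists_eq_add_single_of_pos hj
  simpa using hI hm i hij

theorem IsStronglyStable.eq_span (hI : IsStronglyStable I) :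
    I = Ideal.span ((fun m => monomial m (1 : K)) '' {m | monomial m (1 : K) ∈ I}) := by
  obtain ⟨G, hG⟩ := hI.1
  refine le_antisymm ?_ (Ideal.span_le.2 <| by rintro _ ⟨m, hm, rfl⟩; exact hm)
  have hGI : G ⊆ {m | monomial m (1 : K) ∈ I} := fun g hg => by
    rw [Set.mem_ofPred_eq, hG]
    exact Ideal.subset_span ⟨g, hg, rfl⟩
  exact hG.trans_le (Ideal.span_mono (Set.image_mono hGI))

theorem isStronglyStable_span {G : Set (Fin n →₀ ℕ)} (hG : IsStronglyStableSet G) :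
    IsStronglyStable (Ideal.span ((fun m => monomial m (1 : K)) '' G)) := by
  refine .of_isStronglyStableSet ⟨G, rfl⟩ fun m j hm i hij => ?_
  simp only [Set.mem_ofPred_eq, monomial_one_mem_span_monomial_image] at hm ⊢
  obtain ⟨g, hg, hgm⟩ := hm
  rcases Nat.eq_zero_or_pos (g j) with hgj | hgj
  · have hgm' : g ≤ m := fun k => by
      have := hgm k
      by_cases hk : k = j <;> simp_all
    exact ⟨g, hg, hgm'.trans le_self_add⟩
  · obtain ⟨g', rfl⟩ := Finsupp.exists_eq_add_single_of_pos hgj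
    exact ⟨_, hG hg i hij, (add_le_add_iff_right _).2 ((add_le_add_iff_right _).1 hgm)⟩

theorem monomial_image_add (G H : Set (Fin n →₀ ℕ)) :
    (fun m => monomial m (1 : K)) '' (G + H) =
      (fun m => monomial m (1 : K)) '' G * (fun m => monomial m (1 : K)) '' H := by
  ext
  simp [Set.mem_add, Set.mem_mul, monomial_mul]

theorem IsStronglyStable.mul (hI : IsStronglyStable I) (hJ : IsStronglyStable J) :
    IsStronglyStable (I * J) := by
  rw [hI.eq_span, hJ.eq_span, Ideal.span_mul_span', ← monomial_image_add]
  exact isStronglyStable_span (hI.isStronglyStableSet.add hJ.isStronglyStableSet)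

theorem isStronglyStable_one : IsStronglyStable (1 : Ideal (MvPolynomial (Fin n) K)) :=
  .of_isStronglyStableSet ⟨{0}, by simp⟩ fun _ _ _ _ _ => by simp

theorem isStronglyStable_span_X_Iic (i : Fin n) :
    IsStronglyStable (Ideal.span (X '' Set.Iic i) : Ideal (MvPolynomial (Fin n) K)) := by
  refine .of_isStronglyStableSet ⟨(single · 1) '' Set.Iic i, by rw [Set.image_image]; rfl⟩
    fun m j hm l hlj => ?_
  simp only [Set.mem_ofPred_eq, monomial_one_mem_span_X_image] at hm ⊢
  obtain ⟨k, hk, hmk⟩ := hm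
  by_cases hkj : k = j
  · exact ⟨l, hlj.le.trans (hkj ▸ hk), by simp⟩
  · refine ⟨k, hk, ?_⟩
    simp only [Finsupp.add_apply, Finsupp.single_apply] at hmk ⊢
    split_ifs at hmk ⊢ <;> omega

variable (K) in
noncomputable def principalBorelIdeal (u : Fin n →₀ ℕ) : Ideal (MvPolynomial (Fin n) K) :=
  u.prod fun i k => Ideal.span (X '' Set.Iic i) ^ k

theorem principalBorelIdeal_zero : principalBorelIdeal K (0 : Fin n →₀ ℕ) = 1 :=
  Finsupp.prod_zero_index

theorem principalBorelIdeal_add (u v : Fin n →₀ ℕ) :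
    principalBorelIdeal K (u + v) = principalBorelIdeal K u * principalBorelIdeal K v :=
  Finsupp.prod_add_index' (fun _ => pow_zero _) fun _ => pow_add _

theorem principalBorelIdeal_single (i : Fin n) (k : ℕ) :
    principalBorelIdeal K (single i k) = Ideal.span (X '' Set.Iic i) ^ k :=
  Finsupp.prod_single_index (pow_zero _)

theorem principalBorelIdeal_add_single (u : Fin n →₀ ℕ) (i : Fin n) :
    principalBorelIdeal K (u + single i 1) =
      principalBorelIdeal K u * Ideal.span (X '' Set.Iic i) := by
  rw [principalBorelIdeal_add, principalBorelIdeal_single, pow_one]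

theorem isStronglyStable_principalBorelIdeal (u : Fin n →₀ ℕ) :
    IsStronglyStable (principalBorelIdeal K u) := by
  induction u using Finsupp.induction_add_single_one with
  | zero => exact principalBorelIdeal_zero (K := K) ▸ isStronglyStable_one
  | add_single u i hu =>
    rw [principalBorelIdeal_add_single]
    exact hu.mul (isStronglyStable_span_X_Iic i)

theorem monomial_mem_principalBorelIdeal (u : Fin n →₀ ℕ) :
    monomial u (1 : K) ∈ principalBorelIdeal K u := by
  rw [← prod_X_pow_eq_monomial, principalBorelIdeal, Finsupp.prod]
  refine Ideal.prod_mem_prod fun i _ => Ideal.pow_mem_pow (Ideal.subset_span ?_) _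
  exact ⟨i, Set.mem_Iic.2 le_rfl, rfl⟩

/-- The cofactor `X^w` makes the induction go through: a factor `Xₖ` of `(X₁, …, Xᵢ)` is absorbed
into it, after moving `Xᵢ` to `Xₖ` in `X^(w + u + eᵢ)`. -/
theorem principalBorelIdeal_le_colon (hI : IsStronglyStableSet {m | monomial m (1 : K) ∈ I})
    (u w : Fin n →₀ ℕ) (hu : monomial (w + u) (1 : K) ∈ I) :
    principalBorelIdeal K u ≤ I.colon {monomial w 1} := by
  induction u using Finsupp.induction_add_single_one generalizing w with
  | zero => simpa [principalBorelIdeal_zero, Ideal.one_eq_top] using hu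
  | add_single u i ih =>
    have hX : Ideal.span (X '' Set.Iic i) ≤
        (I.colon {monomial w (1 : K)}).colon (principalBorelIdeal K u : Set _) := by
      refine Ideal.span_le.2 ?_
      rintro _ ⟨k, hk, rfl⟩
      refine Submodule.mem_colon.2 fun r hr => ?_
      have hmove : monomial (w + single k 1 + u) (1 : K) ∈ I := by
        rw [add_right_comm]
        exact hI.add_single_mem_of_le (by rwa [← add_assoc] at hu) hk
      have hw : monomial (w + single k 1) (1 : K) = monomial w 1 * X k := by
        rw [X, monomial_mul, one_mul]
      rw [Submodule.mem_colon_singleton]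
      convert Submodule.mem_colon_singleton.1 (ih _ hmove hr) using 1
      rw [hw, smul_eq_mul, smul_eq_mul, smul_eq_mul]
      ring
    rw [principalBorelIdeal_add_single, mul_comm]
    exact Ideal.mul_le.2 fun s hs r hr => Submodule.mem_colon.1 (hX hs) r hr

theorem principalBorelIdeal_le (hI : IsStronglyStableSet {m | monomial m (1 : K) ∈ I})
    {u : Fin n →₀ ℕ} (hu : monomial u (1 : K) ∈ I) : principalBorelIdeal K u ≤ I := by
  intro f hf
  simpa using principalBorelIdeal_le_colon hI u 0 (by simpa using hu) hf

theorem smallestStronglyStable_eq_principalBorelIdeal (u : Fin n →₀ ℕ) :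
    smallestStronglyStable K u = principalBorelIdeal K u :=
  le_antisymm
    (sInf_le (show principalBorelIdeal K u ∈ _ from
      ⟨isStronglyStable_principalBorelIdeal u, monomial_mem_principalBorelIdeal u⟩))
    (le_sInf fun _ ⟨hI, hu⟩ => principalBorelIdeal_le hI.isStronglyStableSet hu)

end

/-- For monomials `u₁, u₂` one has `I(u₁) · I(u₂) = I(u₁ · u₂)`. -/
theorem smallestStronglyStable_mul {n : ℕ} {K : Type*} [Field K] (u₁ u₂ : Fin n →₀ ℕ) :
    smallestStronglyStable K u₁ * smallestStronglyStable K u₂ =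
      smallestStronglyStable K (u₁ + u₂) := by
  simp only [smallestStronglyStable_eq_principalBorelIdeal, principalBorelIdeal_add]
end

section
/- Let K be a field, X = (X_{ij}) the n×n matrix of indeterminates, and R = K[X_{ij} : 1 ≤ i,j ≤ n]. Given pairs (t_1,a_1),…,(t_w,a_w) of positive integers with t_i + a_i ≤ n+1, set S = {(t_1,a_1),…,(t_w,a_w)}, I_S = ∏_{i=1}^w I_{t_i}(a_i) and J_S = ∏_{i=1}^w J_{t_i}(a_i). Then for every pair (u,b) of positive integers with u + b ≤ n+1, e_{ub}(S) = max{j ≥ 0 : I_S ⊆ I_u(b)^j} = max{j ≥ 0 : J_S ⊆ J_u(b)^j}, where e_{ub}(S) = |{i : b ≤ a_i and u ≤ t_i}|. -/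
open MvPolynomial

/-!
Lower bound: `I_t(a) ⊆ I_u(b)` whenever `u ≤ t` and `b ≤ a` (Laplace expansion along the last row;
for `J`, drop the last factors), so `I_S ⊆ I_u(b) ^ e_ub(S)`.

Upper bound: substitute `X_p ↦ X_p T ^ W p` into `R[T]`, where `W` is one on the entries of row `u`
in columns `≥ b` and zero elsewhere. Every generator of `I_u(b)` has a whole row of weight one, so
`I_u(b) ^ j` lands in `(T ^ j)`. The leftmost maximal minor of each `X_{t_i}(a_i)` has `T`-order
one if `i` is counted by `e_ub(S)` and zero otherwise, and `T`-orders add up in the domain `R[T]`,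
so `j ≤ e_ub(S)`. For `J` the same works with the weight moved to the columns `≥ u + b - 1` of row
`u`, and with the diagonal monomial of the leftmost minor.
-/

/-- The northeast ideal `I_t(a)`: generated by the `t`-minors (maximal minors) of the
submatrix `X_t(a) = (X_ij : 1 ≤ i ≤ t, a ≤ j ≤ n)` (indices encoded `0`-based). -/
noncomputable def neIdeal (K : Type*) [Field K] (n t a : ℕ) : Ideal (MvPolynomial (Fin n × Fin n) K) :=
  Ideal.span {f | ∃ r c : Fin t → Fin n,
    (∀ i : Fin t, (r i : ℕ) = (i : ℕ)) ∧ StrictMono c ∧ (∀ j : Fin t, a ≤ (c j : ℕ) + 1) ∧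
    f = Matrix.det (Matrix.of fun i j : Fin t => X (r i, c j))}

/-- The monomial ideal `J_t(a)`: generated by the products `X_{1 b_1} ⋯ X_{t b_t}` with
`a ≤ b_1 < ⋯ < b_t ≤ n` (indices encoded `0`-based). -/
noncomputable def neMonIdeal (K : Type*) [Field K] (n t a : ℕ) : Ideal (MvPolynomial (Fin n × Fin n) K) :=
  Ideal.span {f | ∃ r c : Fin t → Fin n,
    (∀ i : Fin t, (r i : ℕ) = (i : ℕ)) ∧ StrictMono c ∧ (∀ j : Fin t, a ≤ (c j : ℕ) + 1) ∧
    f = ∏ i : Fin t, X (r i, c i)}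

theorem Ideal.prod_le_pow_card_filter {R ι : Type*} [CommSemiring R] (s : Finset ι)
    (F : ι → Ideal R) (I : Ideal R) (p : ι → Prop) [DecidablePred p]
    (h : ∀ i ∈ s, p i → F i ≤ I) : ∏ i ∈ s, F i ≤ I ^ (s.filter p).card :=
  calc ∏ i ∈ s, F i ≤ ∏ i ∈ s.filter p, F i :=
        Finset.prod_le_prod_of_subset_of_le_one' (Finset.filter_subset _ _) fun _ _ _ =>
          le_of_le_of_eq le_top Ideal.one_eq_top.symm
    _ ≤ I ^ (s.filter p).card :=
        Finset.prod_le_pow_card _ _ _ fun i hi =>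
          h i (Finset.mem_filter.1 hi).1 (Finset.mem_filter.1 hi).2

theorem Polynomial.natTrailingDegree_prod {R ι : Type*} [CommRing R] [IsDomain R]
    (s : Finset ι) (f : ι → Polynomial R) (hf : ∀ i ∈ s, f i ≠ 0) :
    (∏ i ∈ s, f i).natTrailingDegree = ∑ i ∈ s, (f i).natTrailingDegree := by
  classical
  induction s using Finset.induction_on with
  | empty => simp
  | insert x s hx ih =>
    rw [Finset.prod_insert hx, Finset.sum_insert hx,
      ← ih fun i hi => hf i (Finset.mem_insert_of_mem hi),
      natTrailingDegree_mul (hf x (Finset.mem_insert_self _ _))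
        (Finset.prod_ne_zero_iff.2 fun i hi => hf i (Finset.mem_insert_of_mem hi))]

section TAdicOrder

variable {R A F : Type*} [CommRing R] [CommRing A] [FunLike F R (Polynomial A)]
  [RingHomClass F R (Polynomial A)]

theorem Polynomial.X_pow_dvd_apply_of_mem_pow (φ : F) {I : Ideal R}
    (hI : I ≤ (Ideal.span {Polynomial.X}).comap φ) {j : ℕ} {f : R} (hf : f ∈ I ^ j) :
    Polynomial.X ^ j ∣ φ f := by
  rw [← Ideal.mem_span_singleton, ← Ideal.span_singleton_pow, ← Ideal.mem_comap]
  exact (Ideal.le_comap_pow φ j).trans' (Ideal.pow_right_mono hI j) hf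

theorem sSup_setOf_prod_le_pow_eq_card [IsDomain A] {ι : Type*} [Fintype ι] (φ : F)
    {I : Ideal R} (hI : I ≤ (Ideal.span {Polynomial.X}).comap φ) (P : ι → Ideal R)
    (p : ι → Prop) [DecidablePred p] (hP : ∀ i, p i → P i ≤ I) (δ : ι → R)
    (hδ : ∀ i, δ i ∈ P i) (hcoeff : ∀ i, (φ (δ i)).coeff (if p i then 1 else 0) ≠ 0) :
    sSup {j | ∏ i, P i ≤ I ^ j} = (Finset.univ.filter p).card := by
  refine IsGreatest.csSup_eq ⟨Ideal.prod_le_pow_card_filter _ _ _ _ fun i _ => hP i, ?_⟩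
  intro j hj
  have hne : ∀ i ∈ Finset.univ, φ (δ i) ≠ 0 := fun i _ h => hcoeff i (by simp [h])
  have hdvd : Polynomial.X ^ j ∣ ∏ i, φ (δ i) := by
    rw [← map_prod]
    exact Polynomial.X_pow_dvd_apply_of_mem_pow φ hI (hj (Ideal.prod_mem_prod fun i _ => hδ i))
  calc j ≤ (∏ i, φ (δ i)).natTrailingDegree :=
        Polynomial.le_natTrailingDegree (Finset.prod_ne_zero_iff.2 hne)
          (Polynomial.X_pow_dvd_iff.1 hdvd)
    _ = ∑ i, (φ (δ i)).natTrailingDegree := Polynomial.natTrailingDegree_prod _ _ hne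
    _ ≤ ∑ i, if p i then 1 else 0 :=
        Finset.sum_le_sum fun i _ => Polynomial.natTrailingDegree_le_of_ne_zero (hcoeff i)
    _ = (Finset.univ.filter p).card := (Finset.card_filter _ _).symm

end TAdicOrder

namespace MvPolynomial

variable {σ R : Type*} [CommRing R]

noncomputable def weightSubst (W : σ → ℕ) : MvPolynomial σ R →ₐ[R] Polynomial (MvPolynomial σ R) :=
  aeval fun p => Polynomial.C (X p) * Polynomial.X ^ W p

theorem weightSubst_X (W : σ → ℕ) (p : σ) :
    weightSubst (R := R) W (X p) = Polynomial.C (X p) * Polynomial.X ^ W p :=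
  aeval_X _ _

theorem weightSubst_prod_X {ι : Type*} (W : σ → ℕ) (s : Finset ι) (v : ι → σ) :
    weightSubst (R := R) W (∏ i ∈ s, X (v i)) =
      Polynomial.C (∏ i ∈ s, X (v i)) * Polynomial.X ^ ∑ i ∈ s, W (v i) := by
  simp only [map_prod, weightSubst_X, Finset.prod_mul_distrib, Finset.prod_pow_eq_pow_sum]

theorem constantCoeff_weightSubst_X (W : σ → ℕ) (p : σ) :
    Polynomial.constantCoeff (weightSubst (R := R) W (X p)) = if W p = 0 then X p else 0 := by
  split_ifs with h
  · simp [weightSubst_X, h]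
  · simp [weightSubst_X, Polynomial.coeff_X_pow, Ne.symm h]

variable {ι : Type*} [Fintype ι] [DecidableEq ι]

theorem weightSubst_det_eq_X_mul (W : σ → ℕ) (x : ι → ι → σ) (i₀ : ι)
    (h₀ : ∀ j, W (x i₀ j) = 1) (h : ∀ i j, i ≠ i₀ → W (x i j) = 0) :
    weightSubst W (Matrix.of fun i j => (X (x i j) : MvPolynomial σ R)).det =
      Polynomial.X * Polynomial.C (Matrix.of fun i j => (X (x i j) : MvPolynomial σ R)).det := by
  set N : Matrix ι ι (Polynomial (MvPolynomial σ R)) :=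
    Polynomial.C.mapMatrix (Matrix.of fun i j => X (x i j))
  have hmap : RingHom.mapMatrix (weightSubst (R := R) W : MvPolynomial σ R →+* _)
      (Matrix.of fun i j => X (x i j)) =
      N.updateRow i₀ ((Polynomial.X : Polynomial (MvPolynomial σ R)) • N i₀) := by
    ext i j
    by_cases hi : i = i₀
    · subst hi
      simp [N, weightSubst_X, h₀]
    · simp [N, weightSubst_X, h i j hi, hi]
  rw [← AlgHom.coe_toRingHom, RingHom.map_det, hmap, Matrix.det_updateRow_smul,
    Matrix.updateRow_eq_self, RingHom.map_det]

theorem constantCoeff_weightSubst_det (W : σ → ℕ) (x : ι → ι → σ) :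
    Polynomial.constantCoeff
        (weightSubst W (Matrix.of fun i j => (X (x i j) : MvPolynomial σ R)).det) =
      (Matrix.of fun i j => if W (x i j) = 0 then (X (x i j) : MvPolynomial σ R) else 0).det := by
  rw [← AlgHom.coe_toRingHom, ← RingHom.comp_apply, RingHom.map_det]
  exact congrArg _ (Matrix.ext fun i j => constantCoeff_weightSubst_X W (x i j))

theorem det_of_ite_X_ne_zero [Nontrivial R] (x : ι → ι → σ)
    (hx : Function.Injective (Function.uncurry x)) (keep : ι → ι → Prop) [DecidableRel keep]
    (τ : Equiv.Perm ι) (hτ : ∀ i, keep i (τ i)) :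
    (Matrix.of fun i j => if keep i j then (X (x i j) : MvPolynomial σ R) else 0).det ≠ 0 := by
  classical
  -- at the `0/1`-point supported on the entries `(i, τ i)` the matrix specializes to `τ.permMatrix`
  let v : σ → R := fun p => if ∃ i, p = x i (τ i) then 1 else 0
  have heval : (eval v).mapMatrix (Matrix.of fun i j => if keep i j then X (x i j) else 0) =
      τ.permMatrix R := by
    ext i j
    simp only [RingHom.mapMatrix_apply, Matrix.map_apply, Matrix.of_apply, PEquiv.toMatrix_apply,
      Equiv.toPEquiv_apply, Option.mem_def, Option.some.injEq]
    by_cases hij : τ i = j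
    · subst hij
      rw [if_pos (hτ i), eval_X, if_pos rfl]
      exact if_pos ⟨i, rfl⟩
    · have : ¬∃ i', x i j = x i' (τ i') := fun ⟨i', he⟩ => by
        obtain ⟨rfl, rfl⟩ := Prod.mk.inj (hx (a₁ := (i, j)) (a₂ := (i', τ i')) he)
        exact hij rfl
      split_ifs <;> simp [v, this]
  intro h0
  have := congrArg (eval v) h0
  rw [RingHom.map_det, heval, Matrix.det_permutation, map_zero] at this
  exact ((Units.isUnit _).map (Int.castRingHom R)).ne_zero this

theorem det_of_X_ne_zero [Nontrivial R] (x : ι → ι → σ)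
    (hx : Function.Injective (Function.uncurry x)) :
    (Matrix.of fun i j => (X (x i j) : MvPolynomial σ R)).det ≠ 0 := by
  simpa using det_of_ite_X_ne_zero (R := R) x hx (fun _ _ => True) 1 fun _ => trivial

end MvPolynomial

theorem StrictMono.add_val_le_val {t n lo : ℕ} {c : Fin t → Fin n} (hc : StrictMono c)
    (hlo : ∀ j, lo ≤ (c j : ℕ)) (j : Fin t) : lo + j ≤ c j := by
  obtain ⟨j, hj⟩ := j
  induction j with
  | zero => exact hlo _
  | succ k ih => exact (ih (by omega)).trans_lt (hc (Fin.mk_lt_mk.2 k.lt_succ_self))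

namespace NortheastIdeal

variable {K : Type*} [Field K] {n : ℕ}

theorem det_mem_neIdeal {u b t : ℕ} (hut : u ≤ t) (r c : Fin t → Fin n)
    (hr : ∀ i, (r i : ℕ) = i) (hc : StrictMono c) (hcb : ∀ j, b ≤ (c j : ℕ) + 1) :
    (Matrix.of fun i j => X (r i, c j)).det ∈ neIdeal K n u b := by
  induction t, hut using Nat.le_induction with
  | base => exact Ideal.subset_span ⟨r, c, hr, hc, hcb, rfl⟩
  | succ m _ ih =>
    rw [Matrix.det_succ_row _ (Fin.last m), Fin.succAbove_last]
    refine Ideal.sum_mem _ fun j _ => Ideal.mul_mem_left _ _ ?_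
    exact ih (r ∘ Fin.castSucc) (c ∘ j.succAbove) (fun i => by simp [hr])
      (hc.comp (Fin.strictMono_succAbove j)) (fun _ => hcb _)

theorem neIdeal_le_neIdeal {u b t a : ℕ} (hut : u ≤ t) (hba : b ≤ a) :
    neIdeal K n t a ≤ neIdeal K n u b := by
  rw [neIdeal, Ideal.span_le]
  rintro _ ⟨r, c, hr, hc, hca, rfl⟩
  exact det_mem_neIdeal hut r c hr hc fun j => hba.trans (hca j)

theorem neMonIdeal_le_neMonIdeal {u b t a : ℕ} (hut : u ≤ t) (hba : b ≤ a) :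
    neMonIdeal K n t a ≤ neMonIdeal K n u b := by
  rw [neMonIdeal, Ideal.span_le]
  rintro _ ⟨r, c, hr, hc, hca, rfl⟩
  obtain ⟨d, rfl⟩ := Nat.exists_eq_add_of_le hut
  rw [SetLike.mem_coe, Fin.prod_univ_add]
  refine Ideal.mul_mem_right _ _ (Ideal.subset_span ⟨r ∘ Fin.castAdd d, c ∘ Fin.castAdd d,
    fun i => by simp [hr], hc.comp (Fin.strictMono_castAdd d), fun j => hba.trans (hca _), rfl⟩)

-- `1` exactly at the entries `X_{u j}`, `j ≥ b` (`1`-based): the last row of `X_u(b)`.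
def neWeight (u b : ℕ) (p : Fin n × Fin n) : ℕ :=
  if (p.1 : ℕ) + 1 = u ∧ b ≤ (p.2 : ℕ) + 1 then 1 else 0

theorem neWeight_eq_one {u b : ℕ} {i j : Fin n} (hi : (i : ℕ) + 1 = u) (hj : b ≤ (j : ℕ) + 1) :
    neWeight u b (i, j) = 1 :=
  if_pos ⟨hi, hj⟩

theorem neWeight_eq_zero_of_row_ne {u b : ℕ} {i j : Fin n} (hi : (i : ℕ) + 1 ≠ u) :
    neWeight u b (i, j) = 0 :=
  if_neg fun h => hi h.1

theorem neWeight_eq_zero_of_col_lt {u b : ℕ} {i j : Fin n} (hj : (j : ℕ) + 1 < b) :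
    neWeight u b (i, j) = 0 :=
  if_neg fun h => absurd h.2 (not_le.2 hj)

theorem neIdeal_le_comap_weightSubst {u : ℕ} (hu : 0 < u) (b : ℕ) :
    neIdeal K n u b ≤ (Ideal.span {Polynomial.X}).comap
      (weightSubst (R := K) (neWeight (n := n) u b)) := by
  rw [neIdeal, Ideal.span_le]
  rintro _ ⟨r, c, hr, -, hcb, rfl⟩
  rw [SetLike.mem_coe, Ideal.mem_comap,
    weightSubst_det_eq_X_mul _ (fun i j => (r i, c j)) ⟨u - 1, by omega⟩]
  · exact Ideal.mem_span_singleton.2 (dvd_mul_right _ _)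
  · exact fun j => neWeight_eq_one (by rw [hr, Fin.val_mk]; omega) (hcb j)
  · exact fun i j hi => neWeight_eq_zero_of_row_ne fun h =>
      hi (Fin.ext (by rw [hr] at h; exact (by omega : (i : ℕ) = u - 1)))

theorem neMonIdeal_le_comap_weightSubst {u : ℕ} (hu : 0 < u) (b : ℕ) :
    neMonIdeal K n u b ≤ (Ideal.span {Polynomial.X}).comap
      (weightSubst (R := K) (neWeight (n := n) u (u + b - 1))) := by
  rw [neMonIdeal, Ideal.span_le]
  rintro _ ⟨r, c, hr, hc, hcb, rfl⟩
  rw [SetLike.mem_coe, Ideal.mem_comap, weightSubst_prod_X]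
  -- the last factor `X_{u b_u}` of a generator has `b_u ≥ b + u - 1`
  have hlast : neWeight u (u + b - 1) (r ⟨u - 1, by omega⟩, c ⟨u - 1, by omega⟩) = 1 := by
    have := hc.add_val_le_val (lo := b - 1) (fun j => by have := hcb j; omega) ⟨u - 1, by omega⟩
    exact neWeight_eq_one (by rw [hr, Fin.val_mk]; omega) (by rw [Fin.val_mk] at this; omega)
  have hpos : 1 ≤ ∑ i, neWeight u (u + b - 1) (r i, c i) :=
    hlast.ge.trans <| Finset.single_le_sum (f := fun i => neWeight u (u + b - 1) (r i, c i))
      (fun _ _ => Nat.zero_le _) (Finset.mem_univ _)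
  exact Ideal.mem_span_singleton.2 ((dvd_pow_self _ (by omega)).mul_left _)

-- the columns `a, …, a + t - 1` (`1`-based) of the leftmost maximal minor of `X_t(a)`
def neLeadCols (a t : ℕ) (h : a - 1 + t ≤ n) : Fin t → Fin n :=
  Fin.castLE h ∘ Fin.natAdd (a - 1)

theorem neLeadCols_strictMono {a t : ℕ} (h : a - 1 + t ≤ n) : StrictMono (neLeadCols a t h) :=
  (Fin.strictMono_castLE h).comp (Fin.strictMono_natAdd _)

theorem val_neLeadCols {a t : ℕ} (h : a - 1 + t ≤ n) (l : Fin t) :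
    (neLeadCols a t h l : ℕ) = a - 1 + l :=
  rfl

theorem exists_mem_neIdeal_coeff_weightSubst_ne_zero {t a : ℕ} (ha : 0 < a)
    (hta : t + a ≤ n + 1) {u : ℕ} (hu : 0 < u) (b : ℕ) :
    ∃ δ ∈ neIdeal K n t a,
      (weightSubst (neWeight u b) δ).coeff (if b ≤ a ∧ u ≤ t then 1 else 0) ≠ 0 := by
  set r : Fin t → Fin n := Fin.castLE (by omega)
  set c : Fin t → Fin n := neLeadCols a t (by omega)
  have hr : ∀ k, (r k : ℕ) = k := fun _ => rfl
  have hc : ∀ l, (c l : ℕ) = a - 1 + l := fun _ => rfl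
  have hx : Function.Injective (Function.uncurry fun k l => (r k, c l)) :=
    (Fin.castLE_injective _).prodMap (neLeadCols_strictMono _).injective
  have hrow : ∀ (hut : u ≤ t) k l, k ≠ ⟨u - 1, by omega⟩ → neWeight u b (r k, c l) = 0 :=
    fun _ k l hk => neWeight_eq_zero_of_row_ne fun h =>
      hk (Fin.ext (by rw [hr] at h; exact (by omega : (k : ℕ) = u - 1)))
  refine ⟨_, Ideal.subset_span ⟨r, c, hr, neLeadCols_strictMono _,
    fun l => by rw [hc]; omega, rfl⟩, ?_⟩
  split_ifs with hcount
  · rw [weightSubst_det_eq_X_mul _ _ ⟨u - 1, by omega⟩ (fun l => ?_) (hrow hcount.2),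
      Polynomial.coeff_X_mul, Polynomial.coeff_C_zero]
    · exact det_of_X_ne_zero _ hx
    · exact neWeight_eq_one (by rw [hr, Fin.val_mk]; omega) (by rw [hc]; omega)
  · rw [← Polynomial.constantCoeff_apply, constantCoeff_weightSubst_det]
    by_cases hut : u ≤ t
    · -- the entry in row `u`, column `a` has weight zero, since `a < b`
      refine det_of_ite_X_ne_zero _ hx _ (Equiv.swap ⟨0, by omega⟩ ⟨u - 1, by omega⟩) fun k => ?_
      by_cases hk : k = ⟨u - 1, by omega⟩
      · rw [hk, Equiv.swap_apply_right]
        exact neWeight_eq_zero_of_col_lt (by rw [hc, Fin.val_mk]; omega)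
      · exact hrow hut _ _ hk
    · exact det_of_ite_X_ne_zero _ hx _ 1 fun k =>
        neWeight_eq_zero_of_row_ne (by rw [hr]; omega)

theorem exists_mem_neMonIdeal_coeff_weightSubst_ne_zero {t a : ℕ} (ha : 0 < a)
    (hta : t + a ≤ n + 1) {u : ℕ} (hu : 0 < u) (b : ℕ) :
    ∃ μ ∈ neMonIdeal K n t a,
      (weightSubst (neWeight u (u + b - 1)) μ).coeff (if b ≤ a ∧ u ≤ t then 1 else 0) ≠ 0 := by
  set r : Fin t → Fin n := Fin.castLE (by omega)
  set c : Fin t → Fin n := neLeadCols a t (by omega)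
  have hr : ∀ k, (r k : ℕ) = k := fun _ => rfl
  have hc : ∀ l, (c l : ℕ) = a - 1 + l := fun _ => rfl
  refine ⟨_, Ideal.subset_span ⟨r, c, hr, neLeadCols_strictMono _,
    fun l => by rw [hc]; omega, rfl⟩, ?_⟩
  have hweight : ∑ k, neWeight u (u + b - 1) (r k, c k) = if b ≤ a ∧ u ≤ t then 1 else 0 := by
    split_ifs with hcount
    · rw [Finset.sum_eq_single_of_mem ⟨u - 1, by omega⟩ (Finset.mem_univ _)]
      · exact neWeight_eq_one (by rw [hr, Fin.val_mk]; omega) (by rw [hc, Fin.val_mk]; omega)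
      · exact fun k _ hk => neWeight_eq_zero_of_row_ne fun h =>
          hk (Fin.ext (by rw [hr] at h; exact (by omega : (k : ℕ) = u - 1)))
    · refine Finset.sum_eq_zero fun k _ => ?_
      by_cases hk : (k : ℕ) + 1 = u
      · exact neWeight_eq_zero_of_col_lt (by rw [hc]; omega)
      · exact neWeight_eq_zero_of_row_ne (by rwa [hr])
  rw [weightSubst_prod_X, Polynomial.coeff_C_mul, Polynomial.coeff_X_pow, hweight, if_pos rfl,
    mul_one]
  exact Finset.prod_ne_zero_iff.2 fun _ _ => X_ne_zero _

end NortheastIdeal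

open NortheastIdeal in
theorem neIdeal_exponent_eq_max_general (K : Type*) [Field K] (n w : ℕ) (t a : Fin w → ℕ)
    (ha : ∀ i, 0 < a i) (hta : ∀ i, t i + a i ≤ n + 1)
    (u b : ℕ) (hu : 0 < u) :
    ((Finset.univ.filter (fun i : Fin w => b ≤ a i ∧ u ≤ t i)).card =
        sSup {j : ℕ | (∏ i : Fin w, neIdeal K n (t i) (a i)) ≤ (neIdeal K n u b) ^ j}) ∧
    ((Finset.univ.filter (fun i : Fin w => b ≤ a i ∧ u ≤ t i)).card =
        sSup {j : ℕ | (∏ i : Fin w, neMonIdeal K n (t i) (a i)) ≤ (neMonIdeal K n u b) ^ j}) := by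
  choose δ hδ hδcoeff using fun i =>
    exists_mem_neIdeal_coeff_weightSubst_ne_zero (K := K) (ha i) (hta i) hu b
  choose μ hμ hμcoeff using fun i =>
    exists_mem_neMonIdeal_coeff_weightSubst_ne_zero (K := K) (ha i) (hta i) hu b
  exact ⟨(sSup_setOf_prod_le_pow_eq_card _ (neIdeal_le_comap_weightSubst hu b) _ _
      (fun _ hi => neIdeal_le_neIdeal hi.2 hi.1) δ hδ hδcoeff).symm,
    (sSup_setOf_prod_le_pow_eq_card _ (neMonIdeal_le_comap_weightSubst hu b) _ _
      (fun _ hi => neMonIdeal_le_neMonIdeal hi.2 hi.1) μ hμ hμcoeff).symm⟩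

/-- For `S = {(t_1,a_1),…,(t_w,a_w)}` and every `(u,b)` with `u, b > 0`, `u + b ≤ n+1`,
the exponent `e_ub(S) = |{i : b ≤ a_i ∧ u ≤ t_i}|` equals both
`max {j ≥ 0 : I_S ⊆ I_u(b)^j}` and `max {j ≥ 0 : J_S ⊆ J_u(b)^j}`. -/
theorem neIdeal_exponent_eq_max (K : Type*) [Field K] (n w : ℕ) (t a : Fin w → ℕ)
    (ht : ∀ i, 0 < t i) (ha : ∀ i, 0 < a i) (hta : ∀ i, t i + a i ≤ n + 1)
    (u b : ℕ) (hu : 0 < u) (hb : 0 < b) (hub : u + b ≤ n + 1) :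
    ((Finset.univ.filter (fun i : Fin w => b ≤ a i ∧ u ≤ t i)).card =
        sSup {j : ℕ | (∏ i : Fin w, neIdeal K n (t i) (a i)) ≤ (neIdeal K n u b) ^ j}) ∧
    ((Finset.univ.filter (fun i : Fin w => b ≤ a i ∧ u ≤ t i)).card =
        sSup {j : ℕ | (∏ i : Fin w, neMonIdeal K n (t i) (a i)) ≤ (neMonIdeal K n u b) ^ j}) :=
  neIdeal_exponent_eq_max_general K n w t a ha hta u b hu
end

section
/- Let K be a field, X = (X_{ij}) the n×n matrix of indeterminates, and R = K[X_{ij} : 1 ≤ i,j ≤ n]. Let < be the lexicographic monomial order on R induced by the variable order X_{11} > X_{12} > ⋯ > X_{1n} > X_{21} > ⋯ > X_{nn}. Then for all positive integers t, a with t + a ≤ n+1, the initial ideal ini_<(I_t(a)), i.e., the ideal generated by the leading monomials of the nonzero elements of I_t(a), equals J_t(a). -/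
open MvPolynomial

/-- The northeast ideal `I_t(a)` in `K[X_ij]`, the variables being indexed by
`Fin n ×ₗ Fin n` (pairs ordered lexicographically, so `X_{11}` corresponds to the least
index): the ideal generated by the `t`-minors (maximal minors) of the submatrix
`X_t(a) = (X_ij : 1 ≤ i ≤ t, a ≤ j ≤ n)` (indices encoded `0`-based). -/
noncomputable def neIdealL (K : Type*) [Field K] (n t a : ℕ) :
    Ideal (MvPolynomial (Fin n ×ₗ Fin n) K) :=
  Ideal.span {f | ∃ r c : Fin t → Fin n,
    (∀ i : Fin t, (r i : ℕ) = (i : ℕ)) ∧ StrictMono c ∧ (∀ j : Fin t, a ≤ (c j : ℕ) + 1) ∧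
    f = Matrix.det (Matrix.of fun i j : Fin t => X (toLex (r i, c j)))}

/-- The monomial ideal `J_t(a)`: generated by the products `X_{1 b_1} ⋯ X_{t b_t}` with
`a ≤ b_1 < ⋯ < b_t ≤ n` (indices encoded `0`-based). -/
noncomputable def neMonIdealL (K : Type*) [Field K] (n t a : ℕ) :
    Ideal (MvPolynomial (Fin n ×ₗ Fin n) K) :=
  Ideal.span {f | ∃ r c : Fin t → Fin n,
    (∀ i : Fin t, (r i : ℕ) = (i : ℕ)) ∧ StrictMono c ∧ (∀ j : Fin t, a ≤ (c j : ℕ) + 1) ∧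
    f = ∏ i : Fin t, X (toLex (r i, c i))}

/-- The initial ideal of `I` with respect to the lexicographic monomial order determined
by `X_{11} > X_{12} > ⋯ > X_{1n} > X_{21} > ⋯ > X_{nn}`: the ideal generated by the
leading monomials (the lexicographically largest monomials of the support) of the
nonzero elements of `I`.  A monomial `m` beats `m'` when, at the most significant
variable (least index in the lexicographic order on `Fin n ×ₗ Fin n`) where the exponents
differ, the exponent of `m` is larger; this is the order `toLex m' ≤ toLex m` on
exponent vectors. -/
noncomputable def lexInitialIdeal {n : ℕ} {K : Type*} [Field K]
    (I : Ideal (MvPolynomial (Fin n ×ₗ Fin n) K)) :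
    Ideal (MvPolynomial (Fin n ×ₗ Fin n) K) :=
  Ideal.span {g | ∃ f ∈ I, ∃ m ∈ f.support,
    (∀ m' ∈ f.support, toLex m' ≤ toLex m) ∧ g = monomial m (1 : K)}

/-!
Every element of `I_t(a)` is a `K`-linear combination of products `X^μ · Δ_c`, where `Δ_c` is
the `t`-minor on the columns `c`; in the lexicographic order the leading monomial of `Δ_c` is
its diagonal `X_{1 c_1} ⋯ X_{t c_t}`. If `X^μ` contains a variable `X_{i b}` with `b` between
`c_{i-1}` and `c_i`, the Laplace expansion of the minor on the columns `c ∪ {b}` with row `i`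
repeated (a Garnir relation) rewrites `X_{i b} · Δ_c` through products with a smaller leading
monomial, or with the same one and a smaller column sum. So one may assume that `c` is chosen
greedily, row by row, inside the leading monomial of `X^μ · Δ_c`. Greedy products are determined
by their leading monomials, so in a combination of them the largest leading monomial cannot
cancel: the leading monomial of every element of `I_t(a)` is a multiple of a diagonal. Conversely
each diagonal is the leading monomial of its minor.
-/

open scoped Pointwise

theorem Finsupp.toLex_lt_toLex_of_prodLex {α β N : Type*} [LinearOrder α] [LinearOrder β]
    [Zero N] [LT N] {x y : α ×ₗ β →₀ N} (a₀ : α) (b₀ : β)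
    (hrow : ∀ a < a₀, ∀ b, x (toLex (a, b)) = y (toLex (a, b)))
    (hcol : ∀ b < b₀, x (toLex (a₀, b)) = y (toLex (a₀, b)))
    (hlt : x (toLex (a₀, b₀)) < y (toLex (a₀, b₀))) : toLex x < toLex y := by
  refine Finsupp.Lex.lt_iff.mpr ⟨toLex (a₀, b₀), fun w hw => ?_, hlt⟩
  obtain ⟨⟨a, b⟩, rfl⟩ := toLex.surjective w
  rcases Prod.Lex.toLex_lt_toLex.mp hw with h | ⟨rfl, h⟩
  exacts [hrow a h b, hcol b h]

theorem MvPolynomial.mem_ideal_span_iff_mem_span_monomial_smul {σ R : Type*} [CommSemiring R]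
    {S : Set (MvPolynomial σ R)} {f : MvPolynomial σ R} :
    f ∈ Ideal.span S ↔
      f ∈ Submodule.span R ((Set.range fun μ : σ →₀ ℕ => monomial μ (1 : R)) • S) := by
  have htop : Submodule.span R (Set.range fun μ : σ →₀ ℕ => monomial μ (1 : R)) = ⊤ := by
    simpa [coe_basisMonomials] using (basisMonomials σ R).span_eq
  rw [Submodule.span_smul_of_span_eq_top htop]
  rfl

theorem MonomialOrder.exists_degree_eq_of_mem_span {σ K : Type*} [Field K] (m : MonomialOrder σ)
    {S : Set (MvPolynomial σ K)} (hS0 : 0 ∉ S) (hS : S.InjOn m.degree) {f : MvPolynomial σ K}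
    (hf : f ∈ Submodule.span K S) (hf0 : f ≠ 0) : ∃ q ∈ S, m.degree f = m.degree q := by
  obtain ⟨l, hlS, rfl⟩ := Submodule.mem_span_set.mp hf
  have hne : l.support.Nonempty := Finsupp.support_nonempty_iff.mpr (by rintro rfl; simp at hf0)
  obtain ⟨q₀, hq₀, hmax⟩ := l.support.exists_max_image (fun q => m.toSyn (m.degree q)) hne
  have hlt : ∀ q ∈ l.support, q ≠ q₀ → m.toSyn (m.degree q) < m.toSyn (m.degree q₀) :=
    fun q hq hqq₀ => (hmax q hq).lt_of_ne fun h =>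
      hqq₀ (hS (hlS hq) (hlS hq₀) (m.toSyn.injective h))
  refine ⟨q₀, hlS hq₀, m.toSyn.injective (le_antisymm ?_ (m.le_degree ?_))⟩
  · exact m.degree_sum_le.trans (Finset.sup_le fun q hq => m.degree_smul_le.trans (hmax q hq))
  · rw [mem_support_iff, Finsupp.sum, coeff_sum, Finset.sum_eq_single q₀]
    · rw [coeff_smul, smul_eq_mul]
      exact mul_ne_zero (Finsupp.mem_support_iff.mp hq₀)
        (m.coeff_degree_ne_zero_iff.mpr fun h => hS0 (h ▸ hlS hq₀))
    · intro q hq hqq₀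
      rw [coeff_smul, m.coeff_eq_zero_of_lt (hlt q hq hqq₀), smul_zero]
    · exact fun h => absurd hq₀ h

theorem MonomialOrder.mem_support_and_forall_le_iff {σ R : Type*} [CommSemiring R]
    (m : MonomialOrder σ) {f : MvPolynomial σ R} {d : σ →₀ ℕ} :
    (d ∈ f.support ∧ ∀ e ∈ f.support, m.toSyn e ≤ m.toSyn d) ↔ f ≠ 0 ∧ d = m.degree f := by
  refine ⟨fun ⟨hd, hmax⟩ => ⟨fun h => by simp [h] at hd, m.toSyn.injective
    (le_antisymm (m.le_degree hd) (m.degree_le_iff.mpr hmax))⟩, ?_⟩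
  rintro ⟨hf, rfl⟩
  exact ⟨m.degree_mem_support hf, fun e => m.le_degree⟩

theorem lexInitialIdeal_eq_span {n : ℕ} {K : Type*} [Field K]
    (I : Ideal (MvPolynomial (Fin n ×ₗ Fin n) K)) :
    lexInitialIdeal I =
      Ideal.span {g | ∃ f ∈ I, f ≠ 0 ∧ g = monomial (MonomialOrder.lex.degree f) 1} := by
  rw [lexInitialIdeal]
  congr 1
  ext g
  refine exists_congr fun f => and_congr_right fun _ => ⟨?_, ?_⟩
  · rintro ⟨d, hd, hmax, rfl⟩
    obtain ⟨hf, rfl⟩ := MonomialOrder.lex.mem_support_and_forall_le_iff.mp ⟨hd, hmax⟩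
    exact ⟨hf, rfl⟩
  · rintro ⟨hf, rfl⟩
    obtain ⟨hd, hmax⟩ := MonomialOrder.lex.mem_support_and_forall_le_iff.mpr ⟨hf, rfl⟩
    exact ⟨_, hd, hmax, rfl⟩

theorem exists_ne_and_forall_lt_eq {ι α : Type*} [LinearOrder ι] [WellFoundedLT ι]
    {f g : ι → α} (h : f ≠ g) : ∃ i, f i ≠ g i ∧ ∀ j < i, f j = g j := by
  obtain ⟨i, hi, hmin⟩ := wellFounded_lt.has_min {i | f i ≠ g i} (Function.ne_iff.mp h)
  exact ⟨i, hi, fun j hj => by_contra fun hj' => hmin j hj' hj⟩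

namespace MaxMinors

variable {R : Type*} [CommRing R] {n t : ℕ} {r c : Fin t → Fin n}

variable (R) in
noncomputable def minor (r c : Fin t → Fin n) :
    MvPolynomial (Fin n ×ₗ Fin n) R :=
  (Matrix.of fun i j => X (toLex (r i, c j))).det

noncomputable def diagExp (r c : Fin t → Fin n) : Fin n ×ₗ Fin n →₀ ℕ :=
  ∑ i, Finsupp.single (toLex (r i, c i)) 1

theorem monomial_diagExp (r c : Fin t → Fin n) :
    monomial (diagExp r c) (1 : R) = ∏ i, X (toLex (r i, c i)) := by
  simp only [diagExp, monomial_sum_one, X]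

theorem diagExp_apply_row (hr : Function.Injective r) (c : Fin t → Fin n) (i : Fin t) (s : Fin n) :
    diagExp r c (toLex (r i, s)) = if c i = s then 1 else 0 := by
  rw [diagExp, Finsupp.finsetSum_apply, Finset.sum_eq_single i]
  · simp [Finsupp.single_apply, eq_comm]
  · intro j _ hji
    rw [Finsupp.single_apply, if_neg]
    exact fun h => hji (hr (congrArg Prod.fst (toLex.injective h)))
  · simp

theorem diagExp_apply_of_lt (hr : StrictMono r) {c d : Fin t → Fin n} {i₀ : Fin t}
    (hcd : ∀ i < i₀, c i = d i) {a : Fin n} (ha : a < r i₀) (s : Fin n) :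
    diagExp r c (toLex (a, s)) = diagExp r d (toLex (a, s)) := by
  simp only [diagExp, Finsupp.finsetSum_apply]
  refine Finset.sum_congr rfl fun i _ => ?_
  rcases lt_or_ge i i₀ with h | h
  · rw [hcd i h]
  · have : r i ≠ a := (ha.trans_le (hr.monotone h)).ne'
    simp [this]

theorem minor_eq_sum (r c : Fin t → Fin n) :
    minor R r c = ∑ σ : Equiv.Perm (Fin t),
      monomial (diagExp r (c ∘ σ)) ((Equiv.Perm.sign σ : ℤ) : R) := by
  rw [minor, ← Matrix.det_transpose, Matrix.det_apply]
  refine Finset.sum_congr rfl fun σ _ => ?_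
  rw [Units.smul_def, ← Int.cast_smul_eq_zsmul R, ← mul_one ((Equiv.Perm.sign σ : ℤ) : R),
    ← smul_eq_mul, ← smul_monomial, monomial_diagExp, smul_eq_mul, mul_one]
  rfl

theorem toLex_diagExp_comp_lt (hr : StrictMono r) (hc : StrictMono c)
    {σ : Equiv.Perm (Fin t)} (hσ : σ ≠ 1) :
    toLex (diagExp r (c ∘ σ)) < toLex (diagExp r c) := by
  obtain ⟨i, hσi, hfix⟩ : ∃ i, σ i ≠ i ∧ ∀ j < i, σ j = j :=
    exists_ne_and_forall_lt_eq (g := id) fun h => hσ (Equiv.ext (congrFun h))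
  have hlt : i < σ i :=
    (lt_or_gt_of_ne hσi).resolve_left fun h => hσi (σ.injective (hfix _ h))
  refine Finsupp.toLex_lt_toLex_of_prodLex (r i) (c i)
    (fun a ha s => diagExp_apply_of_lt hr (fun j hj => by simp [hfix j hj]) ha s)
    (fun s hs => ?_) ?_ <;>
    simp only [diagExp_apply_row hr.injective, Function.comp_apply]
  · rw [if_neg (hs.trans (hc hlt)).ne', if_neg hs.ne']
  · rw [if_neg fun h => hσi (hc.injective h)]
    simp

theorem coeff_diagExp_minor (hr : StrictMono r) (hc : StrictMono c) :
    coeff (diagExp r c) (minor R r c) = 1 := by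
  rw [minor_eq_sum, coeff_sum, Finset.sum_eq_single 1]
  · simp
  · intro σ _ hσ
    rw [coeff_monomial, if_neg fun h => (toLex_diagExp_comp_lt hr hc hσ).ne (congrArg toLex h)]
  · simp

theorem toLex_le_diagExp_of_mem_support_minor (hr : StrictMono r) (hc : StrictMono c)
    {e : Fin n ×ₗ Fin n →₀ ℕ} (he : e ∈ (minor R r c).support) :
    toLex e ≤ toLex (diagExp r c) := by
  rw [minor_eq_sum] at he
  obtain ⟨σ, -, hσ⟩ := Finset.mem_biUnion.mp (support_sum he)
  rw [Finset.mem_singleton.mp (support_monomial_subset hσ)]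
  rcases eq_or_ne σ 1 with rfl | h
  · rfl
  · exact (toLex_diagExp_comp_lt hr hc h).le

theorem degree_minor [Nontrivial R] (hr : StrictMono r) (hc : StrictMono c) :
    MonomialOrder.lex.degree (minor R r c) = diagExp r c :=
  toLex.injective (le_antisymm
    (MonomialOrder.lex.degree_le_iff.mpr fun _ => toLex_le_diagExp_of_mem_support_minor hr hc)
    (MonomialOrder.lex.le_degree (by simp [mem_support_iff, coeff_diagExp_minor hr hc])))

theorem monic_minor [Nontrivial R] (hr : StrictMono r) (hc : StrictMono c) :
    MonomialOrder.lex.Monic (minor R r c) := by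
  rw [MonomialOrder.Monic, MonomialOrder.leadingCoeff, degree_minor hr hc,
    coeff_diagExp_minor hr hc]

/-- Laplace expansion along the last row of the `(t + 1)`-minor with rows `r, r i₀`, which
vanishes because row `r i₀` occurs twice. -/
theorem sum_neg_one_pow_mul_X_mul_minor (r : Fin t → Fin n) (i₀ : Fin t)
    (E : Fin (t + 1) → Fin n) :
    ∑ j : Fin (t + 1),
      (-1) ^ (t + (j : ℕ)) * X (toLex (r i₀, E j)) * minor R r (E ∘ j.succAbove) = 0 := by
  set M : Matrix (Fin (t + 1)) (Fin (t + 1)) (MvPolynomial (Fin n ×ₗ Fin n) R) :=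
    Matrix.of fun i j => X (toLex (Fin.snoc (α := fun _ => Fin n) r (r i₀) i, E j))
  have h0 : M.det = 0 :=
    Matrix.det_zero_of_row_eq (Fin.castSucc_lt_last i₀).ne (by ext j; simp [M])
  rw [Matrix.det_succ_row M (Fin.last t)] at h0
  rw [← h0]
  refine Finset.sum_congr rfl fun j _ => ?_
  simp [M, minor, Matrix.submatrix, Fin.succAbove_last]

def IsAdmissible (A : Set (Fin n)) (c : Fin t → Fin n) : Prop :=
  StrictMono c ∧ ∀ i, c i ∈ A

/-- In each row `i`, `c i` is the leftmost column of `A` to the right of `c (i - 1)` whose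
variable occurs in the monomial `μ + diagExp r c`. -/
def IsGreedy (A : Set (Fin n)) (r : Fin t → Fin n) (μ : Fin n ×ₗ Fin n →₀ ℕ)
    (c : Fin t → Fin n) : Prop :=
  ∀ i b, b ∈ A → (∀ j < i, c j < b) → b < c i → μ (toLex (r i, b)) = 0

theorem not_isGreedy_of_lt {A : Set (Fin n)} (hr : Function.Injective r)
    {μ₁ μ₂ : Fin n ×ₗ Fin n →₀ ℕ} {c₁ c₂ : Fin t → Fin n} (h₂ : IsAdmissible A c₂)
    (h : μ₁ + diagExp r c₁ = μ₂ + diagExp r c₂) {i : Fin t} (hbelow : ∀ j < i, c₁ j = c₂ j)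
    (hlt : c₂ i < c₁ i) : ¬ IsGreedy A r μ₁ c₁ := by
  intro hg
  have hμ := hg i (c₂ i) (h₂.2 i) (fun j hj => hbelow j hj ▸ h₂.1 hj) hlt
  have := congrArg (· (toLex (r i, c₂ i))) h
  simp [diagExp_apply_row hr, hlt.ne', hμ] at this

theorem eq_of_isGreedy {A : Set (Fin n)} (hr : Function.Injective r)
    {μ₁ μ₂ : Fin n ×ₗ Fin n →₀ ℕ} {c₁ c₂ : Fin t → Fin n}
    (h₁ : IsAdmissible A c₁) (h₂ : IsAdmissible A c₂)
    (hg₁ : IsGreedy A r μ₁ c₁) (hg₂ : IsGreedy A r μ₂ c₂)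
    (h : μ₁ + diagExp r c₁ = μ₂ + diagExp r c₂) : c₁ = c₂ := by
  by_contra hne
  obtain ⟨i, hi, hbelow⟩ := exists_ne_and_forall_lt_eq hne
  rcases lt_or_gt_of_ne hi with hlt | hlt
  · exact not_isGreedy_of_lt hr h₁ h.symm (fun j hj => (hbelow j hj).symm) hlt hg₂
  · exact not_isGreedy_of_lt hr h₂ h hbelow hlt hg₁

/-- The leading exponent of the `j`-th term of `sum_neg_one_pow_mul_X_mul_minor`. -/
noncomputable def garnirExp (r : Fin t → Fin n) (i₀ : Fin t) (E : Fin (t + 1) → Fin n)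
    (j : Fin (t + 1)) : Fin n ×ₗ Fin n →₀ ℕ :=
  Finsupp.single (toLex (r i₀, E j)) 1 + diagExp r (E ∘ j.succAbove)

section Garnir

variable {E : Fin (t + 1) → Fin n} {i₀ : Fin t}

theorem garnirExp_apply_of_lt (hr : StrictMono r) {j j' : Fin (t + 1)} {i : Fin t}
    (hi : i ≤ i₀) (hjj' : ∀ q < i, E (j.succAbove q) = E (j'.succAbove q)) {a : Fin n}
    (ha : a < r i) (s : Fin n) :
    garnirExp r i₀ E j (toLex (a, s)) = garnirExp r i₀ E j' (toLex (a, s)) := by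
  have hne : r i₀ ≠ a := (ha.trans_le (hr.monotone hi)).ne'
  simp only [garnirExp, Finsupp.add_apply, Finsupp.single_apply, toLex_inj, Prod.mk.injEq, hne,
    false_and, if_false, zero_add]
  exact diagExp_apply_of_lt hr hjj' ha s

theorem garnirExp_castSucc_lt (hr : StrictMono r) (hE : StrictMono E) {j : Fin t}
    (hj : j < i₀) :
    toLex (garnirExp r i₀ E j.castSucc) < toLex (garnirExp r i₀ E i₀.castSucc) := by
  have hbelow : ∀ q < j, E (j.castSucc.succAbove q) = E (i₀.castSucc.succAbove q) :=
    fun q hq => by rw [Fin.succAbove_castSucc_of_lt _ _ hq,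
      Fin.succAbove_castSucc_of_lt _ _ (hq.trans hj)]
  have hrow : r i₀ ≠ r j := (hr hj).ne'
  have hsucc : E j.castSucc < E j.succ := hE Fin.castSucc_lt_succ
  refine Finsupp.toLex_lt_toLex_of_prodLex (r j) (E j.castSucc)
    (fun a ha => garnirExp_apply_of_lt hr hj.le hbelow ha) (fun s hs => ?_) ?_ <;>
    simp only [garnirExp, Finsupp.add_apply, Finsupp.single_apply, toLex_inj, Prod.mk.injEq,
      hrow, false_and, if_false, zero_add, diagExp_apply_row hr.injective, Function.comp_apply,
      Fin.succAbove_castSucc_self, Fin.succAbove_castSucc_of_lt _ _ hj]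
  · rw [if_neg (hs.trans hsucc).ne', if_neg hs.ne']
  · rw [if_neg hsucc.ne']
    simp

theorem garnirExp_succ_lt (hr : StrictMono r) (hE : StrictMono E) {k : Fin t} (hk : i₀ < k) :
    toLex (garnirExp r i₀ E k.succ) < toLex (garnirExp r i₀ E i₀.castSucc) := by
  have hbelow : ∀ q < i₀, E (k.succ.succAbove q) = E (i₀.castSucc.succAbove q) :=
    fun q hq => by rw [Fin.succAbove_succ_of_le _ _ (hq.trans hk).le,
      Fin.succAbove_castSucc_of_lt _ _ hq]
  have hk' : E i₀.succ < E k.succ := hE (Fin.succ_lt_succ_iff.mpr hk)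
  have hsucc : E i₀.castSucc < E i₀.succ := hE Fin.castSucc_lt_succ
  refine Finsupp.toLex_lt_toLex_of_prodLex (r i₀) (E i₀.succ)
    (fun a ha => garnirExp_apply_of_lt hr le_rfl hbelow ha) (fun s hs => ?_) ?_ <;>
    simp only [garnirExp, Finsupp.add_apply, Finsupp.single_apply, toLex_inj, Prod.mk.injEq,
      true_and, diagExp_apply_row hr.injective, Function.comp_apply,
      Fin.succAbove_castSucc_self, Fin.succAbove_succ_of_le _ _ hk.le]
  · rw [if_neg (hs.trans hk').ne', if_neg hs.ne', zero_add, add_zero]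
  · rw [if_neg hk'.ne', if_neg hsucc.ne]
    simp

theorem garnirExp_succ_self : garnirExp r i₀ E i₀.succ = garnirExp r i₀ E i₀.castSucc := by
  have hrest : ∀ q ∈ Finset.univ.erase i₀,
      Finsupp.single (toLex (r q, E (i₀.succ.succAbove q))) 1 =
        Finsupp.single (toLex (r q, E (i₀.castSucc.succAbove q))) 1 := by
    intro q hq
    rcases (Finset.ne_of_mem_erase hq).lt_or_gt with h | h
    · rw [Fin.succAbove_succ_of_le _ _ h.le, Fin.succAbove_castSucc_of_lt _ _ h]
    · rw [Fin.succAbove_succ_of_lt _ _ h, Fin.succAbove_castSucc_of_le _ _ h.le]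
  simp only [garnirExp, diagExp, Function.comp_apply,
    ← Finset.add_sum_erase _ _ (Finset.mem_univ i₀), Fin.succAbove_succ_self,
    Fin.succAbove_castSucc_self, Finset.sum_congr rfl hrest]
  abel

theorem sum_succ_succAbove_lt (hE : StrictMono E) :
    ∑ q, (E (i₀.succ.succAbove q) : ℕ) < ∑ q, (E (i₀.castSucc.succAbove q) : ℕ) := by
  refine Finset.sum_lt_sum (fun q _ => ?_) ⟨i₀, Finset.mem_univ _, ?_⟩
  · rcases lt_trichotomy q i₀ with h | rfl | h
    · rw [Fin.succAbove_succ_of_le _ _ h.le, Fin.succAbove_castSucc_of_lt _ _ h]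
    · simpa using (hE Fin.castSucc_lt_succ).le
    · rw [Fin.succAbove_succ_of_lt _ _ h, Fin.succAbove_castSucc_of_le _ _ h.le]
  · simpa using hE Fin.castSucc_lt_succ

/-- The column sum breaks the tie of `garnirExp_succ_self`. -/
noncomputable def straightenKey (r : Fin t → Fin n) (μ : Fin n ×ₗ Fin n →₀ ℕ)
    (c : Fin t → Fin n) : Lex (Fin n ×ₗ Fin n →₀ ℕ) ×ₗ ℕ :=
  toLex (toLex (μ + diagExp r c), ∑ i, (c i : ℕ))

theorem straightenKey_garnir_lt (hr : StrictMono r) (hE : StrictMono E)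
    (μ : Fin n ×ₗ Fin n →₀ ℕ) {j : Fin (t + 1)} (hj : j ≠ i₀.castSucc) :
    straightenKey r (μ + Finsupp.single (toLex (r i₀, E j)) 1) (E ∘ j.succAbove) <
      straightenKey r (μ + Finsupp.single (toLex (r i₀, E i₀.castSucc)) 1)
        (E ∘ i₀.castSucc.succAbove) := by
  simp only [straightenKey, add_assoc, Prod.Lex.toLex_lt_toLex, toLex_add, add_lt_add_iff_left,
    add_right_inj, Function.comp_apply]
  change toLex (garnirExp r i₀ E j) < toLex (garnirExp r i₀ E i₀.castSucc) ∨
    garnirExp r i₀ E j = garnirExp r i₀ E i₀.castSucc ∧ _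
  rcases hj.lt_or_gt with h | h
  · obtain ⟨j', rfl⟩ := Fin.exists_castSucc_eq.mpr (h.trans_le (Fin.le_last _)).ne
    exact Or.inl (garnirExp_castSucc_lt hr hE (Fin.castSucc_lt_castSucc_iff.mp h))
  · obtain ⟨k, rfl⟩ := Fin.exists_succ_eq.mpr ((Fin.zero_le _).trans_lt h).ne'
    rcases (Fin.castSucc_lt_succ_iff.mp h).lt_or_eq with hk | rfl
    · exact Or.inl (garnirExp_succ_lt hr hE hk)
    · exact Or.inr ⟨garnirExp_succ_self, sum_succ_succAbove_lt hE⟩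

end Garnir

theorem monomial_mul_minor_mem_of_garnir (P : Submodule R (MvPolynomial (Fin n ×ₗ Fin n) R))
    (μ : Fin n ×ₗ Fin n →₀ ℕ) (i₀ : Fin t) (E : Fin (t + 1) → Fin n)
    (h : ∀ j ≠ i₀.castSucc, monomial (μ + Finsupp.single (toLex (r i₀, E j)) 1) 1 *
      minor R r (E ∘ j.succAbove) ∈ P) :
    monomial (μ + Finsupp.single (toLex (r i₀, E i₀.castSucc)) 1) 1 *
      minor R r (E ∘ i₀.castSucc.succAbove) ∈ P := by
  set g : Fin (t + 1) → MvPolynomial (Fin n ×ₗ Fin n) R := fun j =>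
    monomial (μ + Finsupp.single (toLex (r i₀, E j)) 1) 1 * minor R r (E ∘ j.succAbove)
  have hrel : ∑ j : Fin (t + 1), (-1) ^ (t + (j : ℕ)) * g j = 0 := by
    have := congrArg (monomial μ (1 : R) * ·) (sum_neg_one_pow_mul_X_mul_minor (R := R) r i₀ E)
    simp only [mul_zero, Finset.mul_sum] at this
    rw [← this]
    refine Finset.sum_congr rfl fun j _ => ?_
    rw [show g j = monomial μ 1 * X (toLex (r i₀, E j)) * minor R r (E ∘ j.succAbove) by
      rw [X, monomial_mul, one_mul]]
    ring
  have hsign : ∀ (k : ℕ) (x : MvPolynomial (Fin n ×ₗ Fin n) R), (-1) ^ k * x ∈ P ↔ x ∈ P := by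
    intro k x
    rcases neg_one_pow_eq_or (MvPolynomial (Fin n ×ₗ Fin n) R) k with hk | hk <;> simp [hk]
  rw [← hsign, eq_neg_of_add_eq_zero_left
    ((Finset.add_sum_erase _ _ (Finset.mem_univ i₀.castSucc)).trans hrel)]
  exact neg_mem (Submodule.sum_mem _ fun j hj => (hsign _ _).mpr (h j (Finset.ne_of_mem_erase hj)))

variable (R) in
def greedyProducts (A : Set (Fin n)) (r : Fin t → Fin n) :
    Set (MvPolynomial (Fin n ×ₗ Fin n) R) :=
  {q | ∃ μ c, IsAdmissible A c ∧ IsGreedy A r μ c ∧ q = monomial μ 1 * minor R r c}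

theorem monomial_mul_minor_mem_span_greedyProducts {A : Set (Fin n)} (hr : StrictMono r)
    (μ : Fin n ×ₗ Fin n →₀ ℕ) {c : Fin t → Fin n} (hc : IsAdmissible A c) :
    monomial μ 1 * minor R r c ∈ Submodule.span R (greedyProducts R A r) := by
  induction hk : straightenKey r μ c using WellFoundedLT.induction generalizing μ c with
  | ind k ih =>
  subst hk
  by_cases hg : IsGreedy A r μ c
  · exact Submodule.subset_span ⟨μ, c, hc, hg, rfl⟩
  obtain ⟨i₀, b, hbA, hcb, hbc, hμ⟩ : ∃ i₀ b, b ∈ A ∧ (∀ j < i₀, c j < b) ∧ b < c i₀ ∧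
      μ (toLex (r i₀, b)) ≠ 0 := by
    simpa [IsGreedy] using hg
  obtain ⟨μ', rfl⟩ : ∃ μ', μ = μ' + Finsupp.single (toLex (r i₀, b)) 1 :=
    ⟨_, (tsub_add_cancel_of_le (Finsupp.single_le_iff.mpr (Nat.one_le_iff_ne_zero.mpr hμ))).symm⟩
  -- remove `X_{r i₀, b}` by the Garnir relation on the columns `c` with `b` inserted
  set E := Fin.insertNth (α := fun _ => Fin n) i₀.castSucc b c
  have hEc : E ∘ i₀.castSucc.succAbove = c := funext (Fin.insertNth_apply_succAbove _ _ _)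
  have hEb : E i₀.castSucc = b := Fin.insertNth_apply_same _ _ _
  have hE : StrictMono E := (Fin.strictMono_insertNth_iff _ _ _).mpr
    ⟨hc.1, fun i hi => hcb i (Fin.castSucc_lt_castSucc_iff.mp hi),
      fun i hi => hbc.trans_le (hc.1.monotone (Fin.castSucc_le_castSucc_iff.mp hi))⟩
  have hEA : ∀ q, E q ∈ A :=
    Fin.succAboveCases i₀.castSucc (hEb ▸ hbA) fun q => by simpa [E] using hc.2 q
  rw [← hEb, ← hEc]
  refine monomial_mul_minor_mem_of_garnir _ μ' i₀ E fun j hj => ?_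
  refine ih _ ?_ _ ⟨hE.comp (Fin.strictMono_succAbove j), fun q => hEA _⟩ rfl
  simpa only [hEb, hEc] using straightenKey_garnir_lt hr hE μ' hj

section Field

variable {K : Type*} [Field K]

theorem degree_monomial_mul_minor (hr : StrictMono r) (hc : StrictMono c)
    (μ : Fin n ×ₗ Fin n →₀ ℕ) :
    MonomialOrder.lex.degree (monomial μ 1 * minor K r c) = μ + diagExp r c := by
  classical
  rw [MonomialOrder.degree_mul (monomial_eq_zero.not.mpr one_ne_zero) (monic_minor hr hc).ne_zero,
    MonomialOrder.degree_monomial, if_neg one_ne_zero, degree_minor hr hc]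

theorem lexInitialIdeal_span_minor (hr : StrictMono r) (A : Set (Fin n)) :
    lexInitialIdeal (Ideal.span {f | ∃ c, IsAdmissible A c ∧ f = minor K r c}) =
      Ideal.span {f | ∃ c, IsAdmissible A c ∧ f = ∏ i, X (toLex (r i, c i))} := by
  have hS0 : 0 ∉ greedyProducts K A r := by
    rintro ⟨μ, c, hc, -, h⟩
    exact (MonomialOrder.monic_monomial_one.mul (monic_minor hr hc.1)).ne_zero h.symm
  have hinj : (greedyProducts K A r).InjOn MonomialOrder.lex.degree := by
    rintro _ ⟨μ₁, c₁, h₁, g₁, rfl⟩ _ ⟨μ₂, c₂, h₂, g₂, rfl⟩ heq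
    rw [degree_monomial_mul_minor hr h₁.1, degree_monomial_mul_minor hr h₂.1] at heq
    obtain rfl := eq_of_isGreedy hr.injective h₁ h₂ g₁ g₂ heq
    rw [add_right_cancel heq]
  rw [lexInitialIdeal_eq_span]
  refine le_antisymm (Ideal.span_le.mpr ?_) (Ideal.span_le.mpr ?_)
  · rintro _ ⟨f, hf, hf0, rfl⟩
    have hspan : f ∈ Submodule.span K (greedyProducts K A r) := by
      rw [mem_ideal_span_iff_mem_span_monomial_smul] at hf
      refine Submodule.span_le.mpr ?_ hf
      rintro _ ⟨_, ⟨μ, rfl⟩, _, ⟨c, hc, rfl⟩, rfl⟩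
      exact monomial_mul_minor_mem_span_greedyProducts hr μ hc
    obtain ⟨_, ⟨μ, c, hc, -, rfl⟩, hdeg⟩ :=
      MonomialOrder.lex.exists_degree_eq_of_mem_span hS0 hinj hspan hf0
    rw [SetLike.mem_coe, hdeg, degree_monomial_mul_minor hr hc.1, ← mul_one (1 : K), ← monomial_mul,
      monomial_diagExp]
    exact Ideal.mul_mem_left _ _ (Ideal.subset_span ⟨c, hc, rfl⟩)
  · rintro _ ⟨c, hc, rfl⟩
    refine Ideal.subset_span ⟨minor K r c, Ideal.subset_span ⟨c, hc, rfl⟩,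
      (monic_minor hr hc.1).ne_zero, ?_⟩
    rw [degree_minor hr hc.1, monomial_diagExp]

end Field

end MaxMinors

open MaxMinors in
theorem lexInitialIdeal_neIdeal_general (K : Type*) [Field K] (n t a : ℕ) :
    lexInitialIdeal (neIdealL K n t a) = neMonIdealL K n t a := by
  by_cases htn : t ≤ n
  · have hrows : ∀ r : Fin t → Fin n, (∀ i : Fin t, (r i : ℕ) = i) ↔ r = Fin.castLE htn :=
      fun r => ⟨fun h => funext fun i => Fin.ext (h i), fun h i => h ▸ rfl⟩
    simp only [neIdealL, neMonIdealL, hrows, exists_and_left, exists_eq_left]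
    convert lexInitialIdeal_span_minor (K := K) (Fin.strictMono_castLE htn) {j | a ≤ (j : ℕ) + 1}
      using 5 <;> simp [IsAdmissible, and_assoc, minor]
  · have hrows : ∀ r : Fin t → Fin n, ¬ ∀ i : Fin t, (r i : ℕ) = i :=
      fun r h => (r ⟨n, by omega⟩).isLt.ne (h ⟨n, by omega⟩)
    simp [neIdealL, neMonIdealL, hrows, lexInitialIdeal]

/-- For all `t, a > 0` with `t + a ≤ n + 1`, the initial ideal of `I_t(a)` with respect
to the lexicographic order with `X_{11} > X_{12} > ⋯ > X_{nn}` equals `J_t(a)`. -/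
theorem lexInitialIdeal_neIdeal (K : Type*) [Field K] (n t a : ℕ)
    (ht : 0 < t) (ha : 0 < a) (hta : t + a ≤ n + 1) :
    lexInitialIdeal (neIdealL K n t a) = neMonIdealL K n t a :=
  lexInitialIdeal_neIdeal_general K n t a
end
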